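/- arXiv:2312.17062 — 6 statements merged into one kernel-verified Lean document; each statement's English description precedes it below -/
import Mathlib

section
/- If κ is a regular cardinal and (L,<_L) is a scattered linear order of cardinality κ, then either (κ,∈) or its reverse order (κ,∈*) embeds into (L,<_L). -/
/-!
Suppose neither `κ` nor `κ*` embeds into `L`, and call `x, y` equivalent when fewer than `κ`
points lie between them; since `κ` is infinite this is an equivalence relation with convex
classes. A class of size `κ` would contain, on one side of some point, `κ` points whose initial
segments are all small, and regularity of `κ` would let us build an increasing (or, on the other
side, decreasing) `κ`-sequence there. So every class is small; hence there are at least two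
classes, and the interval between two distinct classes, having size `κ`, meets a third one.
The classes are therefore densely ordered, and a set of representatives contains a copy of `ℚ`.
-/

noncomputable section
open Cardinal

open Set OrderDual

universe u

theorem exists_strictMono_of_forall_exists_gt {α M : Type*} [Preorder α] [WellFoundedLT α]
    [Preorder M] (h : ∀ a : α, ∀ g : Iio a → M, ∃ m, ∀ b, g b < m) :
    ∃ f : α → M, StrictMono f := by
  choose F hF using h
  let f : α → M := wellFounded_lt.fix fun a g => F a fun b => g b b.2
  refine ⟨f, fun a b hab => ?_⟩
  have hfb : f b = F b fun c => f c := wellFounded_lt.fix_eq _ b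
  exact hfb ▸ hF b (fun c => f c) ⟨a, hab⟩

theorem exists_forall_lt_of_forall_mk_Iic_lt {κ : Cardinal.{u}} (hκ : κ.IsRegular)
    {M : Type u} [LinearOrder M] (hM : κ ≤ #M) (hIic : ∀ y : M, #(Iic y) < κ)
    {s : Set M} (hs : #s < κ) : ∃ m, ∀ x ∈ s, x < m := by
  have hU : #(⋃ x ∈ s, Iic x) < κ :=
    (card_biUnion_lt_iff_forall_of_isRegular hκ hs).2 fun x _ => hIic x
  obtain ⟨m, hm⟩ : ∃ m, m ∉ ⋃ x ∈ s, Iic x := by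
    by_contra! hall
    rw [eq_univ_of_forall hall, mk_univ] at hU
    exact hU.not_ge hM
  simp only [mem_iUnion, mem_Iic, not_exists, not_le] at hm
  exact ⟨m, hm⟩

theorem exists_strictMono_ord_toType_of_forall_mk_Iic_lt {κ : Cardinal.{u}} (hκ : κ.IsRegular)
    {M : Type u} [LinearOrder M] (hM : κ ≤ #M) (hIic : ∀ y : M, #(Iic y) < κ) :
    ∃ f : κ.ord.ToType → M, StrictMono f := by
  refine exists_strictMono_of_forall_exists_gt fun a g => ?_
  obtain ⟨m, hm⟩ := exists_forall_lt_of_forall_mk_Iic_lt hκ hM hIic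
    (mk_range_le.trans_lt (by simpa using mk_Iio_lt a))
  exact ⟨m, fun b => hm _ (mem_range_self b)⟩

theorem exists_strictMono_ord_toType_of_le_mk {κ : Cardinal.{u}} (hκ : κ.IsRegular)
    {L : Type u} [LinearOrder L] (x : L) (hx : κ ≤ #{y | x ≤ y ∧ #(uIcc x y) < κ}) :
    ∃ f : κ.ord.ToType → L, StrictMono f := by
  set M := {y | x ≤ y ∧ #(uIcc x y) < κ}
  have hIic (y : M) : #(Iic y) < κ := by
    have hsub : Subtype.val '' Iic y ⊆ uIcc x y := by
      rintro _ ⟨z, hzy, rfl⟩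
      rw [uIcc_of_le y.2.1]
      exact ⟨z.2.1, hzy⟩
    rw [← mk_image_eq Subtype.val_injective]
    exact (mk_le_mk_of_subset hsub).trans_lt y.2.2
  obtain ⟨f, hf⟩ := exists_strictMono_ord_toType_of_forall_mk_Iic_lt hκ hx hIic
  exact ⟨_, (Subtype.strictMono_coe _).comp hf⟩

theorem exists_strictMono_or_strictAnti_of_le_mk {κ : Cardinal.{u}} (hκ : κ.IsRegular)
    {L : Type u} [LinearOrder L] (x : L) (hx : κ ≤ #{y | #(uIcc x y) < κ}) :
    (∃ f : κ.ord.ToType → L, StrictMono f) ∨ (∃ f : κ.ord.ToType → L, StrictAnti f) := by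
  have hsub : {y | #(uIcc x y) < κ} ⊆
      {y | x ≤ y ∧ #(uIcc x y) < κ} ∪ {y | y ≤ x ∧ #(uIcc x y) < κ} := fun y hy =>
    (le_total x y).imp (⟨·, hy⟩) (⟨·, hy⟩)
  have hdual : #{y : Lᵒᵈ | toDual x ≤ y ∧ #(uIcc (toDual x) y) < κ} =
      #{y | y ≤ x ∧ #(uIcc x y) < κ} := by
    refine mk_congr (ofDual.subtypeEquiv fun y => ?_)
    obtain ⟨y, rfl⟩ := toDual.surjective y
    simp only [mem_ofPred_eq, uIcc_toDual, toDual_le_toDual, ofDual_toDual]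
    rfl
  obtain hup | hdown :
      κ ≤ #{y | x ≤ y ∧ #(uIcc x y) < κ} ∨ κ ≤ #{y | y ≤ x ∧ #(uIcc x y) < κ} := by
    by_contra! hsmall
    exact hx.not_gt <| (mk_le_mk_of_subset hsub).trans_lt <|
      (mk_union_le _ _).trans_lt (add_lt_of_lt hκ.aleph0_le hsmall.1 hsmall.2)
  · exact .inl (exists_strictMono_ord_toType_of_le_mk hκ x hup)
  · obtain ⟨f, hf⟩ := exists_strictMono_ord_toType_of_le_mk hκ (toDual x) (hdual ▸ hdown)
    exact .inr ⟨fun a => ofDual (f a), fun a b hab => hf hab⟩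

theorem exists_rat_strictMono_of_setoid {L : Type*} [LinearOrder L] (s : Setoid L)
    (hconv : ∀ ⦃a b c⦄, a ≤ b → b ≤ c → s a c → s a b)
    (hsplit : ∀ ⦃a b⦄, a < b → ¬ s a b → ∃ z ∈ Icc a b, ¬ s a z ∧ ¬ s z b)
    (hne : ∃ a b, ¬ s a b) : ∃ f : ℚ → L, StrictMono f := by
  let S := range (Quotient.out : Quotient s → L)
  have : Nontrivial S := by
    obtain ⟨a, b, hab⟩ := hne
    refine ⟨⟨_, mem_range_self ⟦a⟧⟩, ⟨_, mem_range_self ⟦b⟧⟩, fun h => hab ?_⟩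
    exact Quotient.exact (Quotient.out_injective (congrArg Subtype.val h))
  have : DenselyOrdered S := by
    constructor
    rintro ⟨_, c, rfl⟩ ⟨_, d, rfl⟩ hcd
    change c.out < d.out at hcd
    have hcd' : ¬ s c.out d.out := fun h => hcd.ne (congrArg _ (Quotient.out_equiv_out.1 h))
    obtain ⟨z, ⟨hcz, hzd⟩, hnc, hnd⟩ := hsplit hcd hcd'
    have hz : s ⟦z⟧.out z := Quotient.mk_out z
    refine ⟨⟨_, mem_range_self ⟦z⟧⟩, Subtype.mk_lt_mk.2 ?_, Subtype.mk_lt_mk.2 ?_⟩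
    · by_contra! h
      exact hnc (s.trans (s.symm (hconv h hcz hz)) hz)
    · by_contra! h
      exact hnd (hconv hzd h (s.symm hz))
  obtain ⟨e⟩ := Order.embedding_from_countable_to_dense (α := ℚ) (β := S)
  exact ⟨_, (Subtype.strictMono_coe _).comp e.strictMono⟩

section SmallInterval

variable (L : Type u) [LinearOrder L] {κ : Cardinal.{u}} (hκ : ℵ₀ ≤ κ)

def smallIntervalSetoid : Setoid L where
  r x y := #(uIcc x y) < κ
  iseqv :=
    { refl x := by simpa using one_lt_aleph0.trans_le hκ
      symm {x y} h := uIcc_comm x y ▸ h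
      trans {x y z} hxy hyz := (mk_le_mk_of_subset uIcc_subset_uIcc_union_uIcc).trans_lt
        ((mk_union_le _ _).trans_lt (add_lt_of_lt hκ hxy hyz)) }

variable {L}

theorem smallIntervalSetoid_of_le_of_le {a b c : L} (hab : a ≤ b) (hbc : b ≤ c)
    (hac : smallIntervalSetoid L hκ a c) : smallIntervalSetoid L hκ a b :=
  (mk_le_mk_of_subset (uIcc_subset_uIcc_left (mem_uIcc_of_le hab hbc))).trans_lt hac

variable (hclass : ∀ x : L, #{y | #(uIcc x y) < κ} < κ)
include hclass

theorem exists_not_smallIntervalSetoid_of_lt {a b : L} (hab : a < b)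
    (hnab : ¬ smallIntervalSetoid L hκ a b) :
    ∃ z ∈ Icc a b, ¬ smallIntervalSetoid L hκ a z ∧ ¬ smallIntervalSetoid L hκ z b := by
  by_contra! h
  have hsub : Icc a b ⊆ {y | #(uIcc a y) < κ} ∪ {y | #(uIcc b y) < κ} := fun z hz =>
    (em (#(uIcc a z) < κ)).imp id fun haz => (smallIntervalSetoid L hκ).symm (h z hz haz)
  refine hnab ?_
  change #(uIcc a b) < κ
  rw [uIcc_of_le hab.le]
  exact (mk_le_mk_of_subset hsub).trans_lt
    ((mk_union_le _ _).trans_lt (add_lt_of_lt hκ (hclass a) (hclass b)))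

theorem exists_not_smallIntervalSetoid (hL : κ ≤ #L) :
    ∃ a b, ¬ smallIntervalSetoid L hκ a b := by
  obtain ⟨a⟩ : Nonempty L := mk_ne_zero_iff.1 (aleph0_pos.trans_le (hκ.trans hL)).ne'
  by_contra! h
  have hsub : Set.univ ⊆ {y | #(uIcc a y) < κ} := fun b _ => h a b
  exact (hclass a).not_ge (hL.trans (mk_univ.symm.trans_le (mk_le_mk_of_subset hsub)))

end SmallInterval

/-- Hausdorff: if `κ` is an infinite regular cardinal and `L` is a scattered linear order of
cardinality `κ`, then either `(κ,∈)` or its reverse embeds into `L`. -/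
theorem stmt0 (κ : Cardinal.{0}) (hreg : κ.IsRegular) (L : Type) [LinearOrder L]
    (hcard : Cardinal.mk L = κ)
    (hscat : ¬ ∃ f : ℚ → L, StrictMono f) :
    (∃ f : κ.ord.ToType → L, StrictMono f) ∨ (∃ f : κ.ord.ToType → L, StrictAnti f) := by
  refine or_iff_not_and_not.2 fun ⟨hmono, hanti⟩ => hscat ?_
  have hclass (x : L) : #{y | #(uIcc x y) < κ} < κ :=
    not_le.1 fun hx => (exists_strictMono_or_strictAnti_of_le_mk hreg x hx).elim hmono hanti
  exact exists_rat_strictMono_of_setoid (smallIntervalSetoid L hreg.aleph0_le)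
    (fun _ _ _ => smallIntervalSetoid_of_le_of_le hreg.aleph0_le)
    (fun _ _ => exists_not_smallIntervalSetoid_of_lt hreg.aleph0_le hclass)
    (exists_not_smallIntervalSetoid hreg.aleph0_le hclass hcard.ge)
end
end

section
/- Suppose T ⊆ {}^{<κ}ω is a uniformly ϱ-coherent κ-Aronszajn tree. Then for all s ∈ T with dom(s) a successor (non-limit) ordinal and all i < ω, there exists a map φ : T_{[s]} → T_{[s,i]} which preserves the lexicographic order and preserves incompatibility in the tree order ⊆. -/
noncomputable section
open Cardinal Set

/-- A node of a streamlined tree: a partial function from ordinals to `ℕ`,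
encoded as an `Option ℕ`-valued function; its domain is meant to be an ordinal. -/
abbrev ONode : Type 1 := Ordinal → Option ℕ

/-- `t` has domain exactly the ordinal `α`. -/
def nodeDom (t : ONode) (α : Ordinal) : Prop := ∀ γ, (t γ).isSome ↔ γ < α

/-- The restriction `t ↾ β`. -/
def nrestrict (t : ONode) (β : Ordinal) : ONode := fun γ => if γ < β then t γ else none

/-- `nExt t s` says that `s` extends `t`, i.e. `t ⊆ s` as functions. -/
def nExt (t s : ONode) : Prop := ∀ γ, (t γ).isSome → s γ = t γ

/-- Incompatibility of two nodes in the tree order `⊆`. -/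
def nIncomp (s t : ONode) : Prop := ¬ nExt s t ∧ ¬ nExt t s

/-- The `α`-th level of `T`. -/
def levelSet (T : Set ONode) (α : Ordinal) : Set ONode := {t ∈ T | nodeDom t α}

/-- `T ⊆ {}^{<κ}ω` is a streamlined `κ`-tree. -/
structure IsStreamTree (κ : Cardinal.{0}) (T : Set ONode) : Prop where
  hdom : ∀ t ∈ T, ∃ α < κ.ord, nodeDom t α
  down : ∀ t ∈ T, ∀ β, nrestrict t β ∈ T
  level_ne : ∀ α < κ.ord, (levelSet T α).Nonempty
  level_small : ∀ α < κ.ord, Cardinal.mk ↥(levelSet T α) < Cardinal.lift.{1} κ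

/-- The lexicographic (strict) order on nodes: `s <_lex t` iff `s ⊊ t`, or
`s(Δ) < t(Δ)` at the least point `Δ` of disagreement. -/
def lexLT (s t : ONode) : Prop :=
  (nExt s t ∧ s ≠ t) ∨
  ∃ Δ m n, (∀ γ < Δ, s γ = t γ) ∧ s Δ = some m ∧ t Δ = some n ∧ m < n

/-- `T` has a chain (branch) of size `κ`. -/
def HasKappaBranch (κ : Cardinal.{0}) (T : Set ONode) : Prop :=
  ∃ B ⊆ T, (∀ s ∈ B, ∀ t ∈ B, nExt s t ∨ nExt t s) ∧
    Cardinal.lift.{1} κ ≤ Cardinal.mk ↥B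

/-- A `ϱ`-modification: a finitely supported integer correction term, whose support
is a finite set of non-limit ordinals below `κ` containing `0`. -/
structure RhoMod (κ : Cardinal.{0}) where
  x : Finset Ordinal
  zero_mem : (0 : Ordinal) ∈ x
  mem_nacc : ∀ β ∈ x, β < κ.ord ∧ ¬ Order.IsSuccLimit β
  f : Ordinal → ℤ

/-- `max (dom η ∩ (β+1))`: the largest point of the support of `η` that is `≤ β`. -/
def RhoMod.anchor {κ : Cardinal.{0}} (η : RhoMod κ) (β : Ordinal) : Ordinal :=
  (η.x.filter (· ≤ β)).max' ⟨0, Finset.mem_filter.2 ⟨η.zero_mem, zero_le (a := β)⟩⟩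

/-- `η * τ` is everywhere defined (takes values in `ω`). -/
def rhoDefined {κ : Cardinal.{0}} (η : RhoMod κ) (t : ONode) : Prop :=
  ∀ γ n, t γ = some n → 0 ≤ η.f (η.anchor γ) + (n : ℤ)

/-- The action `η * t` of a `ϱ`-modification on a node. -/
def rhoAct {κ : Cardinal.{0}} (η : RhoMod κ) (t : ONode) : ONode :=
  fun γ => (t γ).map fun n => (η.f (η.anchor γ) + (n : ℤ)).toNat

/-- `T` is `ϱ`-uniform: closed under all (defined) `ϱ`-modifications. -/
def RhoUniform (κ : Cardinal.{0}) (T : Set ONode) : Prop :=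
  ∀ t ∈ T, ∀ η : RhoMod κ, rhoDefined η t → rhoAct η t ∈ T

/-- `T` is `ϱ`-coherent: any two nodes on a common level are `ϱ`-modifications of each other. -/
def RhoCoherent (κ : Cardinal.{0}) (T : Set ONode) : Prop :=
  ∀ α < κ.ord, ∀ s ∈ levelSet T α, ∀ t ∈ levelSet T α,
    ∃ η : RhoMod κ, rhoDefined η t ∧ rhoAct η t = s

/-- The cone `T_{[s]}`. -/
def cone (T : Set ONode) (s : ONode) : Set ONode := {t ∈ T | nExt t s ∨ nExt s t}

/-- The frozen cone `T_{[s,i]}`. -/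
def frozenCone (T : Set ONode) (s : ONode) (i : ℕ) : Set ONode :=
  {t ∈ T | nExt t s ∨ (nExt s t ∧ ∀ ξ n, ¬ (s ξ).isSome → t ξ = some n → i ≤ n)}

/-! Since `dom s = α` is not a limit, `{0, α}` can serve as the support of a `ϱ`-modification,
namely the one that adds `0` below `α` and `i` from `α` on. By uniformity it maps `T` into `T`;
it fixes every node below `s`, maps every node above `s` into `T_{[s,i]}`, and, acting on each
coordinate by a strictly increasing map of `ω`, it preserves `⊆`, incompatibility and `<_lex`. -/

lemma nodeDom_unique {t : ONode} {α β : Ordinal} (hα : nodeDom t α) (hβ : nodeDom t β) :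
    α = β := by
  by_contra hne
  rcases lt_or_gt_of_ne hne with h | h
  · exact (hα α).mp ((hβ α).mpr h) |>.false
  · exact (hβ β).mp ((hα β).mpr h) |>.false

def nMap (g : Ordinal → ℕ → ℕ) (t : ONode) : ONode := fun γ => (t γ).map (g γ)

section nMap

variable {g : Ordinal → ℕ → ℕ}

lemma nMap_injective (hg : ∀ γ, (g γ).Injective) : (nMap g).Injective :=
  fun _ _ h => funext fun γ => Option.map_injective (hg γ) (congrFun h γ)

lemma nExt_nMap_iff (hg : ∀ γ, (g γ).Injective) {a b : ONode} :
    nExt (nMap g a) (nMap g b) ↔ nExt a b := by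
  simp only [nExt, nMap, Option.isSome_map, (Option.map_injective (hg _)).eq_iff]

lemma nIncomp_nMap_iff (hg : ∀ γ, (g γ).Injective) {a b : ONode} :
    nIncomp (nMap g a) (nMap g b) ↔ nIncomp a b := by
  simp only [nIncomp, nExt_nMap_iff hg]

lemma lexLT_nMap (hg : ∀ γ, StrictMono (g γ)) {a b : ONode} (hab : lexLT a b) :
    lexLT (nMap g a) (nMap g b) := by
  have hinj : ∀ γ, (g γ).Injective := fun γ => (hg γ).injective
  rcases hab with ⟨hext, hne⟩ | ⟨Δ, m, n, hagree, ha, hb, hmn⟩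
  · exact .inl ⟨(nExt_nMap_iff hinj).2 hext, (nMap_injective hinj).ne hne⟩
  · refine .inr ⟨Δ, g Δ m, g Δ n, fun γ hγ => ?_, ?_, ?_, hg Δ hmn⟩ <;>
      simp [nMap, *]

end nMap

def raiseAbove (α : Ordinal) (i : ℕ) (γ : Ordinal) (n : ℕ) : ℕ :=
  if γ < α then n else n + i

section raiseAbove

variable {α : Ordinal} {i : ℕ}

lemma strictMono_raiseAbove (γ : Ordinal) : StrictMono (raiseAbove α i γ) := by
  unfold raiseAbove
  split_ifs
  exacts [strictMono_id, strictMono_id.add_const i]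

variable {s t : ONode} (hs : nodeDom s α)
include hs

lemma nMap_raiseAbove_eq_self (hts : nExt t s) : nMap (raiseAbove α i) t = t := by
  funext γ
  cases ht : t γ with
  | none => simp [nMap, ht]
  | some n =>
    have hγ : γ < α := (hs γ).mp (by simp [hts γ (by simp [ht]), ht])
    simp [nMap, raiseAbove, ht, hγ]

lemma nExt_nMap_raiseAbove (hst : nExt s t) : nExt s (nMap (raiseAbove α i) t) := by
  intro γ hγ
  obtain ⟨n, hn⟩ := Option.isSome_iff_exists.mp hγ
  simp [nMap, raiseAbove, hst γ hγ, hn, (hs γ).mp hγ]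

lemma le_of_nMap_raiseAbove_eq_some {ξ : Ordinal} {n : ℕ} (hξ : ¬ (s ξ).isSome)
    (ht : nMap (raiseAbove α i) t ξ = some n) : i ≤ n := by
  have hξα : ¬ ξ < α := fun h => hξ ((hs ξ).mpr h)
  cases htξ : t ξ <;> simp_all [nMap, raiseAbove]
  omega

lemma nMap_raiseAbove_mem_frozenCone {T : Set ONode} (hT : nMap (raiseAbove α i) t ∈ T)
    (ht : t ∈ cone T s) : nMap (raiseAbove α i) t ∈ frozenCone T s i := by
  refine ⟨hT, ht.2.imp (fun hts => ?_) fun hst => ?_⟩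
  · rwa [nMap_raiseAbove_eq_self hs hts]
  · exact ⟨nExt_nMap_raiseAbove hs hst, fun _ _ => le_of_nMap_raiseAbove_eq_some hs⟩

end raiseAbove

section RhoMod

variable {κ : Cardinal.{0}}

lemma RhoMod.anchor_le (η : RhoMod κ) (γ : Ordinal) : η.anchor γ ≤ γ :=
  (Finset.mem_filter.mp (Finset.max'_mem _ _)).2

lemma RhoMod.le_anchor (η : RhoMod κ) {β γ : Ordinal} (hβ : β ∈ η.x) (hβγ : β ≤ γ) :
    β ≤ η.anchor γ :=
  Finset.le_max' (η.x.filter (· ≤ γ)) β (Finset.mem_filter.mpr ⟨hβ, hβγ⟩)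

def raiseMod {α : Ordinal} (hα : α < κ.ord) (hsucc : ¬ Order.IsSuccLimit α) (i : ℕ) :
    RhoMod κ where
  x := {0, α}
  zero_mem := by simp
  mem_nacc β hβ := by
    rcases Finset.mem_insert.mp hβ with rfl | hβ
    · exact ⟨(zero_le (a := α)).trans_lt hα, Ordinal.not_isSuccLimit_zero⟩
    · rw [Finset.mem_singleton.mp hβ]
      exact ⟨hα, hsucc⟩
  f := fun γ => if γ < α then 0 else (i : ℤ)

variable {α : Ordinal} (hα : α < κ.ord) (hsucc : ¬ Order.IsSuccLimit α) (i : ℕ)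

lemma raiseMod_f_anchor (γ : Ordinal) :
    (raiseMod hα hsucc i).f ((raiseMod hα hsucc i).anchor γ) =
      if γ < α then 0 else (i : ℤ) := by
  set η := raiseMod hα hsucc i
  have hα_mem : α ∈ η.x := by simp [η, raiseMod]
  have hiff : η.anchor γ < α ↔ γ < α :=
    ⟨fun h => lt_of_not_ge fun hαγ => (η.le_anchor hα_mem hαγ).not_gt h,
      (η.anchor_le γ).trans_lt⟩
  change (if η.anchor γ < α then (0 : ℤ) else i) = _
  simp only [hiff]

lemma rhoDefined_raiseMod (t : ONode) : rhoDefined (raiseMod hα hsucc i) t := by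
  intro γ n _
  rw [raiseMod_f_anchor]
  split_ifs <;> omega

lemma rhoAct_raiseMod (t : ONode) : rhoAct (raiseMod hα hsucc i) t = nMap (raiseAbove α i) t := by
  funext γ
  simp only [rhoAct, nMap, raiseMod_f_anchor]
  cases t γ with
  | none => rfl
  | some n =>
    simp only [Option.map_some, raiseAbove]
    split_ifs
    · simp
    · simp; omega

end RhoMod

theorem stmt6_general (κ : Cardinal.{0})
    (T : Set ONode) (hT : IsStreamTree κ T)
    (huni : RhoUniform κ T)
    (s : ONode) (hs : s ∈ T) (α : Ordinal) (hsdom : nodeDom s α) (hsucc : ¬ Order.IsSuccLimit α)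
    (i : ℕ) :
    ∃ φ : ↥(cone T s) → ↥(frozenCone T s i),
      (∀ a b : ↥(cone T s), lexLT a.1 b.1 → lexLT (φ a).1 (φ b).1) ∧
      (∀ a b : ↥(cone T s), nIncomp a.1 b.1 → nIncomp (φ a).1 (φ b).1) := by
  obtain ⟨β, hβ, hsβ⟩ := hT.hdom s hs
  have hα : α < κ.ord := nodeDom_unique hsdom hsβ ▸ hβ
  have hmem (t : ↥(cone T s)) : nMap (raiseAbove α i) t.1 ∈ frozenCone T s i := by
    refine nMap_raiseAbove_mem_frozenCone hsdom ?_ t.2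
    rw [← rhoAct_raiseMod hα hsucc i]
    exact huni _ t.2.1 _ (rhoDefined_raiseMod hα hsucc i t.1)
  have hinj (γ : Ordinal) : (raiseAbove α i γ).Injective := (strictMono_raiseAbove γ).injective
  exact ⟨fun t => ⟨_, hmem t⟩, fun _ _ => lexLT_nMap strictMono_raiseAbove,
    fun _ _ => (nIncomp_nMap_iff hinj).2⟩

/-- For `s ∈ T` of successor (non-limit) height and `i < ω`, there is a map from the cone
`T_{[s]}` to the frozen cone `T_{[s,i]}` preserving `<_lex` and incompatibility. -/
theorem stmt6 (κ : Cardinal.{0}) (hreg : κ.IsRegular) (hunc : Cardinal.aleph0 < κ)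
    (T : Set ONode) (hT : IsStreamTree κ T)
    (hAron : ¬ HasKappaBranch κ T)
    (huni : RhoUniform κ T) (hcoh : RhoCoherent κ T)
    (s : ONode) (hs : s ∈ T) (α : Ordinal) (hsdom : nodeDom s α) (hsucc : ¬ Order.IsSuccLimit α)
    (i : ℕ) :
    ∃ φ : ↥(cone T s) → ↥(frozenCone T s i),
      (∀ a b : ↥(cone T s), lexLT a.1 b.1 → lexLT (φ a).1 (φ b).1) ∧
      (∀ a b : ↥(cone T s), nIncomp a.1 b.1 → nIncomp (φ a).1 (φ b).1) :=
  stmt6_general κ T hT huni s hs α hsdom hsucc i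
end
end

section
/- Suppose ⟨D_α : α < κ⟩ witnesses P⁻(κ,2,⊑,κ). Define C_0 = ∅, C_{β+1} = {β}, for α = ω·β with β a successor ordinal let C_α be any cofinal subset of α of order type ω, and for α = ω·β with β a limit ordinal let C_α = {ω·γ : γ ∈ D_β}. Then ⟨C_α : α < κ⟩ satisfies: (1) for limit α, C_α is club in α; (2) if ᾱ ∈ acc(C_α) then C_ᾱ = C_α ∩ ᾱ; (3) {α < κ : otp(C_α) = ω} is cofinal in κ; and (5) for every sequence ⟨B_i : i < κ⟩ of cofinal subsets of the limit ordinals below κ, there are stationarily many α < κ such that sup(nacc(C_α) ∩ B_i) = α for every i < α. -/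
noncomputable section
open Cardinal Set

/-- `acc(C)`: the accumulation points of `C` belonging to `C`. -/
def accOf (C : Set Ordinal) : Set Ordinal := {β ∈ C | 0 < β ∧ sSup (C ∩ Set.Iio β) = β}

/-- `nacc(C) = C \ acc(C)`. -/
def naccOf (C : Set Ordinal) : Set Ordinal := C \ accOf C

/-- `C` is a club (closed unbounded) subset of `α`. -/
def ClubIn (C : Set Ordinal) (α : Ordinal) : Prop :=
  C ⊆ Set.Iio α ∧ (∀ β < α, ∃ γ ∈ C, β ≤ γ) ∧
    ∀ β < α, 0 < β → sSup (C ∩ Set.Iio β) = β → β ∈ C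

/-- `S` is stationary in `α`. -/
def StatIn (S : Set Ordinal) (α : Ordinal) : Prop :=
  ∀ D, ClubIn D α → (S ∩ D).Nonempty

/-!
Multiplication by `ω` is a normal function, so it commutes with suprema and carries the
accumulation points, the non-accumulation points and the clubs of `D_β` to those of
`C_{ω·β} = ω '' D_β`; clubness and coherence at `ω·β` for limit `β` are thus inherited from `D`,
while an `ω`-type set `C_{ω·β}` has no accumulation points at all. For the hitting property,
pull each `B_i` back along `γ ↦ ω·γ` (its elements are limits, hence of the form `ω·γ`) and apply
`P⁻` to the pulled-back sets on the club of fixed points `α = ω·α`, where `C_α = ω '' D_α`.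
-/

open Order Ordinal

theorem nonempty_of_sSup_pos {T : Set Ordinal} (h : 0 < sSup T) : T.Nonempty :=
  let ⟨t, ht, _⟩ := exists_lt_of_lt_csSup' h
  ⟨t, ht⟩

theorem exists_omega0_mul_eq {α : Ordinal} (h : IsSuccLimit α) : ∃ q, 0 < q ∧ ω * q = α := by
  obtain ⟨q, rfl⟩ := isSuccPrelimit_iff_omega0_dvd.1 h.isSuccPrelimit
  refine ⟨q, pos_iff_ne_zero.2 ?_, rfl⟩
  rintro rfl
  exact h.ne_bot (mul_zero ω)

theorem StrictMono.image_inter_Iio {α β : Type*} [LinearOrder α] [LinearOrder β] {f : α → β}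
    (hf : StrictMono f) (S : Set α) (a : α) : f '' S ∩ Iio (f a) = f '' (S ∩ Iio a) := by
  rw [← image_inter_preimage]
  congr! 2
  ext
  simp [hf.lt_iff_lt]

theorem isSuccLimit_of_mem_accOf {C : Set Ordinal} {β : Ordinal} (hβ : β ∈ accOf C) :
    IsSuccLimit β := by
  obtain ⟨-, hβ0, hsup⟩ := hβ
  have hne := nonempty_of_sSup_pos (hβ0.trans_eq hsup.symm)
  have hlub := isLUB_csSup hne ⟨β, fun _ h => h.2.le⟩
  rw [hsup] at hlub
  exact hlub.isSuccLimit_of_notMem hne fun h => lt_irrefl β h.2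

theorem accOf_singleton (x : Ordinal) : accOf {x} = ∅ := by
  refine eq_empty_of_forall_notMem fun β ⟨hβx, hβ0, hsup⟩ => ?_
  obtain ⟨y, hyx, hyβ⟩ := nonempty_of_sSup_pos (hβ0.trans_eq hsup.symm)
  exact (mem_Iio.1 hyβ).ne (hyx.trans hβx.symm)

theorem accOf_image {f : Ordinal → Ordinal} (hf : IsNormal f) (S : Set Ordinal) :
    accOf (f '' S) = f '' accOf S := by
  ext x
  constructor
  · rintro ⟨⟨γ, hγ, rfl⟩, hpos, hsup⟩
    rw [hf.strictMono.image_inter_Iio] at hsup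
    obtain ⟨t, ht⟩ := (nonempty_of_sSup_pos (hpos.trans_eq hsup.symm)).of_image
    rw [← hf.map_sSup ⟨t, ht⟩ ⟨γ, fun _ h => h.2.le⟩, hf.strictMono.injective.eq_iff] at hsup
    exact ⟨γ, ⟨hγ, pos_of_gt ht.2, hsup⟩, rfl⟩
  · rintro ⟨γ, ⟨hγ, hγ0, hsup⟩, rfl⟩
    refine ⟨mem_image_of_mem f hγ, zero_le.trans_lt (hf.strictMono hγ0), ?_⟩
    rw [hf.strictMono.image_inter_Iio, ← hf.map_sSup (nonempty_of_sSup_pos (hγ0.trans_eq hsup.symm))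
      ⟨γ, fun _ h => h.2.le⟩, hsup]

theorem naccOf_image {f : Ordinal → Ordinal} (hf : IsNormal f) (S : Set Ordinal) :
    naccOf (f '' S) = f '' naccOf S := by
  rw [naccOf, naccOf, accOf_image hf, image_sdiff hf.strictMono.injective]

theorem StrictMono.sSup_range_inter_Iio_ne {f : ℕ → Ordinal} (hf : StrictMono f) {β : Ordinal}
    {n : ℕ} (hβ0 : 0 < β) (hβn : β ≤ f n) : sSup (range f ∩ Iio β) ≠ β := by
  intro hsup
  have hbelow : ∀ x < β, ∃ m, x < f m ∧ f m < β := fun x hx => by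
    obtain ⟨_, ⟨⟨m, rfl⟩, hm⟩, hxm⟩ := exists_lt_of_lt_csSup' (hx.trans_eq hsup.symm)
    exact ⟨m, hxm, hm⟩
  have hall : ∀ k, f k < β := by
    intro k
    induction k with
    | zero =>
      obtain ⟨m, -, hm⟩ := hbelow 0 hβ0
      exact (hf.monotone m.zero_le).trans_lt hm
    | succ k ih =>
      obtain ⟨m, hkm, hm⟩ := hbelow _ ih
      exact (hf.monotone (hf.lt_iff_lt.1 hkm)).trans_lt hm
  exact (hall n).not_ge hβn

theorem clubIn_range_of_strictMono {f : ℕ → Ordinal} {α : Ordinal} (hf : StrictMono f)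
    (hsub : range f ⊆ Iio α) (hcof : ∀ δ < α, ∃ n, δ ≤ f n) : ClubIn (range f) α := by
  refine ⟨hsub, fun β hβ => ?_, fun β hβ hβ0 hsup => ?_⟩
  · obtain ⟨n, hn⟩ := hcof β hβ
    exact ⟨f n, mem_range_self n, hn⟩
  · obtain ⟨n, hn⟩ := hcof β hβ
    exact (hf.sSup_range_inter_Iio_ne hβ0 hn hsup).elim

theorem ClubIn.sSup_mem {C T : Set Ordinal} {α : Ordinal} (hC : ClubIn C α) (hTC : T ⊆ C)
    (hT : T.Nonempty) (hTα : sSup T < α) : sSup T ∈ C := by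
  have hbdd : BddAbove T := ⟨α, fun t ht => (hC.1 (hTC ht)).le⟩
  by_cases hmem : sSup T ∈ T
  · exact hTC hmem
  have hlt : ∀ t ∈ T, t < sSup T := fun t ht =>
    (le_csSup hbdd ht).lt_of_ne fun h => hmem (h ▸ ht)
  obtain ⟨t, ht⟩ := hT
  refine hC.2.2 _ hTα (pos_of_gt (hlt t ht)) (le_antisymm ?_ ?_)
  · exact csSup_le ⟨t, hTC ht, hlt t ht⟩ fun x hx => hx.2.le
  · exact csSup_le_csSup ⟨sSup T, fun x hx => hx.2.le⟩ ⟨t, ht⟩ fun x hx => ⟨hTC hx, hlt x hx⟩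

theorem ClubIn.image {f : Ordinal → Ordinal} (hf : IsNormal f) {C : Set Ordinal} {α : Ordinal}
    (hC : ClubIn C α) (hα : IsSuccLimit α) : ClubIn (f '' C) (f α) := by
  refine ⟨?_, fun β hβ => ?_, fun β hβ hβ0 hsup => ?_⟩
  · rintro _ ⟨γ, hγ, rfl⟩
    exact hf.strictMono (hC.1 hγ)
  · obtain ⟨a, ha, hβa⟩ := (hf.lt_iff_exists_lt hα).1 hβ
    obtain ⟨γ, hγ, haγ⟩ := hC.2.1 a ha
    exact ⟨f γ, mem_image_of_mem f hγ, hβa.le.trans (hf.monotone haγ)⟩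
  · rw [← image_inter_preimage] at hsup
    have hT := (nonempty_of_sSup_pos (hβ0.trans_eq hsup.symm)).of_image
    rw [← hf.map_sSup hT ⟨α, fun γ hγ => (hC.1 hγ.1).le⟩] at hsup
    have hTα : sSup (C ∩ f ⁻¹' Iio β) < α := hf.strictMono.lt_iff_lt.1 (hsup.trans_lt hβ)
    exact ⟨_, hC.sSup_mem inter_subset_left hT hTα, hsup⟩

section FixedPoints

variable {f : Ordinal → Ordinal} {E : Set Ordinal} {κ : Ordinal}

theorem ClubIn.exists_fixedPoint_ge (hE : ClubIn E κ) (hf : IsNormal f) (hκ : ℵ₀ < κ.cof)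
    (hfκ : ∀ γ < κ, f γ < κ) {β : Ordinal} (hβ : β < κ) :
    ∃ s ∈ E ∩ {α | 0 < α ∧ f α = α}, β ≤ s := by
  have hκlim : IsSuccLimit κ := one_lt_cof_iff.1 (one_lt_aleph0.trans hκ)
  have hnext : ∀ p, ∃ e, p < κ → e ∈ E ∧ f p < e := fun p => by
    by_cases hp : p < κ
    · obtain ⟨e, he, hpe⟩ := hE.2.1 _ (hκlim.succ_lt (hfκ p hp))
      exact ⟨e, fun _ => ⟨he, (lt_succ _).trans_le hpe⟩⟩
    · exact ⟨0, fun h => absurd h hp⟩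
  choose next hnext using hnext
  -- `s = sup g` is a limit both of points of `E` and of values `f (g n)`: it lies in `E` and is
  -- fixed by `f`
  let g : ℕ → Ordinal := fun n => next^[n] β
  have hgκ : ∀ n, g n < κ := by
    intro n
    induction n with
    | zero => exact hβ
    | succ n ih =>
      simp only [g, Function.iterate_succ_apply']
      exact hE.1 (hnext _ ih).1
  have hgE : ∀ n, g (n + 1) ∈ E := fun n => by
    simp only [g, Function.iterate_succ_apply']
    exact (hnext _ (hgκ n)).1
  have hgf : ∀ n, f (g n) < g (n + 1) := fun n => by
    simp only [g, Function.iterate_succ_apply']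
    exact (hnext _ (hgκ n)).2
  have hbdd : BddAbove (range fun n => g (n + 1)) := bddAbove_of_small
  set s := ⨆ n, g (n + 1)
  have hgs : ∀ n, g (n + 1) ≤ s := le_ciSup hbdd
  have hsκ : s < κ := lift_iSup_lt_of_lt_cof (by simpa using hκ) fun n => hgκ (n + 1)
  have hsE : s ∈ E := hE.sSup_mem (range_subset_iff.2 hgE) (range_nonempty _) hsκ
  have hsf : f s = s := by
    refine le_antisymm ?_ hf.strictMono.le_apply
    rw [hf.map_iSup hbdd]
    exact ciSup_le fun n => (hgf (n + 1)).le.trans (hgs (n + 1))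
  have hβs : β < s := (hf.strictMono.le_apply.trans_lt (hgf 0)).trans_le (hgs 0)
  exact ⟨s, ⟨hsE, pos_of_gt hβs, hsf⟩, hβs.le⟩

theorem ClubIn.inter_fixedPoints (hE : ClubIn E κ) (hf : IsNormal f) (hκ : ℵ₀ < κ.cof)
    (hfκ : ∀ γ < κ, f γ < κ) : ClubIn (E ∩ {α | 0 < α ∧ f α = α}) κ := by
  refine ⟨fun x hx => hE.1 hx.1, fun β hβ => hE.exists_fixedPoint_ge hf hκ hfκ hβ,
    fun β hβ hβ0 hsup => ?_⟩
  set T := (E ∩ {α | 0 < α ∧ f α = α}) ∩ Iio β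
  have hT : T.Nonempty := nonempty_of_sSup_pos (hβ0.trans_eq hsup.symm)
  have hfT : f '' T = T := (image_congr fun t ht => ht.1.2.2).trans (image_id T)
  refine ⟨hsup ▸ hE.sSup_mem (fun t ht => ht.1.1) hT (hsup.trans_lt hβ), hβ0, ?_⟩
  rw [← hsup, hf.map_sSup hT ⟨β, fun _ h => h.2.le⟩, hfT]

end FixedPoints

theorem preimage_omega0_mul_cofinal {κ : Ordinal} {B : Set Ordinal} (hκω : ∀ β < κ, ω * β < κ)
    (hB : B ⊆ {δ | δ < κ ∧ IsSuccLimit δ} ∧ ∀ β < κ, ∃ γ ∈ B, β ≤ γ) :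
    (ω * ·) ⁻¹' B ⊆ Iio κ ∧ ∀ β < κ, ∃ γ ∈ (ω * ·) ⁻¹' B, β ≤ γ := by
  refine ⟨fun γ hγ => (le_mul_right γ omega0_pos).trans_lt (hB.1 hγ).1, fun β hβ => ?_⟩
  obtain ⟨δ, hδ, hβδ⟩ := hB.2 _ (hκω β hβ)
  obtain ⟨γ, -, rfl⟩ := exists_omega0_mul_eq (hB.1 hδ).2
  exact ⟨γ, hδ, (isNormal_mul_right omega0_pos).strictMono.le_iff_le.1 hβδ⟩

namespace OmegaStretch

variable {κ : Ordinal} {D Cs : Ordinal → Set Ordinal}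

theorem clubIn (hD1 : ∀ α < κ, IsSuccLimit α → ClubIn (D α) α)
    (hComegasucc : ∀ β < κ, ¬ IsSuccLimit β → 0 < β →
      Cs (ω * β) ⊆ Iio (ω * β) ∧
      ∃ f : ℕ → Ordinal, StrictMono f ∧ range f = Cs (ω * β) ∧ ∀ δ < ω * β, ∃ n, δ ≤ f n)
    (hComegalim : ∀ β < κ, IsSuccLimit β → Cs (ω * β) = (ω * ·) '' D β)
    {α : Ordinal} (hα : α < κ) (hlim : IsSuccLimit α) : ClubIn (Cs α) α := by
  obtain ⟨q, hq0, rfl⟩ := exists_omega0_mul_eq hlim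
  have hqκ : q < κ := (le_mul_right q omega0_pos).trans_lt hα
  by_cases hq : IsSuccLimit q
  · rw [hComegalim q hqκ hq]
    exact (hD1 q hqκ hq).image (isNormal_mul_right omega0_pos) hq
  · obtain ⟨hsub, f, hf, hrange, hcof⟩ := hComegasucc q hqκ hq hq0
    rw [← hrange] at hsub ⊢
    exact clubIn_range_of_strictMono hf hsub hcof

theorem eq_inter_Iio_of_mem_accOf (hD1 : ∀ α < κ, IsSuccLimit α → ClubIn (D α) α)
    (hD2 : ∀ α < κ, ∀ β ∈ accOf (D α), D β = D α ∩ Iio β)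
    (hC0 : Cs 0 = ∅) (hCsucc : ∀ β, Cs (β + 1) = {β})
    (hComegaseq : ∀ β < κ, ¬ IsSuccLimit β → 0 < β →
      ∃ f : ℕ → Ordinal, StrictMono f ∧ range f = Cs (ω * β))
    (hComegalim : ∀ β < κ, IsSuccLimit β → Cs (ω * β) = (ω * ·) '' D β)
    {α β : Ordinal} (hα : α < κ) (hβ : β ∈ accOf (Cs α)) : Cs β = Cs α ∩ Iio β := by
  have hω := isNormal_mul_right (a := ω) omega0_pos
  rcases zero_or_succ_or_isSuccLimit α with rfl | ⟨x, rfl⟩ | hlim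
  · rw [hC0] at hβ
    exact (notMem_empty β hβ.1).elim
  · rw [succ_eq_add_one, hCsucc, accOf_singleton] at hβ
    exact hβ.elim
  obtain ⟨q, hq0, rfl⟩ := exists_omega0_mul_eq hlim
  have hqκ : q < κ := (le_mul_right q omega0_pos).trans_lt hα
  by_cases hq : IsSuccLimit q
  · rw [hComegalim q hqκ hq, accOf_image hω] at hβ
    obtain ⟨γ, hγ, rfl⟩ := hβ
    have hγq : γ < q := (hD1 q hqκ hq).1 hγ.1
    rw [hComegalim q hqκ hq, hComegalim γ (hγq.trans hqκ) (isSuccLimit_of_mem_accOf hγ),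
      hD2 q hqκ γ hγ, hω.strictMono.image_inter_Iio]
  · obtain ⟨f, hf, hrange⟩ := hComegaseq q hqκ hq hq0
    rw [← hrange] at hβ
    obtain ⟨⟨n, rfl⟩, hβ0, hsup⟩ := hβ
    exact (hf.sSup_range_inter_Iio_ne hβ0 le_rfl hsup).elim

theorem exists_gt_eq_range (hκ : IsSuccLimit κ) (hκω : ∀ β < κ, ω * β < κ)
    (hComegaseq : ∀ β < κ, ¬ IsSuccLimit β → 0 < β →
      ∃ f : ℕ → Ordinal, StrictMono f ∧ range f = Cs (ω * β))
    {β : Ordinal} (hβ : β < κ) :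
    ∃ α, β < α ∧ α < κ ∧ ∃ f : ℕ → Ordinal, StrictMono f ∧ range f = Cs α := by
  have hβ1 : β + 1 < κ := succ_eq_add_one β ▸ hκ.succ_lt hβ
  obtain ⟨f, hf, hrange⟩ :=
    hComegaseq (β + 1) hβ1 (succ_eq_add_one β ▸ not_isSuccLimit_succ β) (pos_of_gt (lt_add_one β))
  exact ⟨ω * (β + 1), (lt_add_one β).trans_le (le_mul_right _ omega0_pos), hκω _ hβ1, f, hf, hrange⟩

theorem statIn_hitting (hκ : ℵ₀ < κ.cof) (hκω : ∀ β < κ, ω * β < κ)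
    (hD3 : ∀ A : Ordinal → Set Ordinal,
      (∀ i < κ, A i ⊆ Iio κ ∧ ∀ β < κ, ∃ γ ∈ A i, β ≤ γ) →
      StatIn {α | α < κ ∧ ∀ i < α, sSup (naccOf (D α) ∩ A i) = α} κ)
    (hComegalim : ∀ β < κ, IsSuccLimit β → Cs (ω * β) = (ω * ·) '' D β)
    {B : Ordinal → Set Ordinal}
    (hB : ∀ i < κ, B i ⊆ {δ | δ < κ ∧ IsSuccLimit δ} ∧ ∀ β < κ, ∃ γ ∈ B i, β ≤ γ) :
    StatIn {α | α < κ ∧ ∀ i < α, sSup (naccOf (Cs α) ∩ B i) = α} κ := by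
  have hω := isNormal_mul_right (a := ω) omega0_pos
  have hA := fun i hi => preimage_omega0_mul_cofinal hκω (hB i hi)
  intro E hE
  obtain ⟨α, ⟨hακ, hαhit⟩, hαE, hα0, hαfix⟩ := hD3 _ hA _ (hE.inter_fixedPoints hω hκ hκω)
  refine ⟨α, ⟨hακ, fun i hi => ?_⟩, hαE⟩
  have hαlim : IsSuccLimit α := hαfix ▸ isSuccLimit_mul_left isSuccLimit_omega0 hα0
  have hX := hαhit i hi
  have hXne := nonempty_of_sSup_pos (hα0.trans_eq hX.symm)
  have hXbdd : BddAbove (naccOf (D α) ∩ (ω * ·) ⁻¹' B i) :=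
    ⟨κ, fun γ hγ => ((hA i (hi.trans hακ)).1 hγ.2).le⟩
  rw [← hαfix, hComegalim α hακ hαlim, naccOf_image hω, ← image_inter_preimage,
    ← hω.map_sSup hXne hXbdd, hX]

end OmegaStretch

/-- From a witness `⟨D_α⟩` of `P⁻(κ,2,⊑,κ)`, the derived sequence `⟨C_α⟩`
(with `C_0 = ∅`, `C_{β+1} = {β}`, `C_{ω·β}` of order type `ω` for successor `β`, and
`C_{ω·β} = {ω·γ : γ ∈ D_β}` for limit `β`) is a coherent `C`-sequence, has cofinally many
members of order type `ω`, and retains the hitting property with respect to cofinal sets of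
limit ordinals. -/
theorem stmt10 (κ : Cardinal.{0}) (hreg : κ.IsRegular) (hunc : Cardinal.aleph0 < κ)
    (D Cs : Ordinal → Set Ordinal)
    (hD1 : ∀ α < κ.ord, Order.IsSuccLimit α → ClubIn (D α) α)
    (hD2 : ∀ α < κ.ord, ∀ β ∈ accOf (D α), D β = D α ∩ Set.Iio β)
    (hD3 : ∀ A : Ordinal → Set Ordinal,
      (∀ i < κ.ord, A i ⊆ Set.Iio κ.ord ∧ ∀ β < κ.ord, ∃ γ ∈ A i, β ≤ γ) →
      StatIn {α | α < κ.ord ∧ ∀ i < α, sSup (naccOf (D α) ∩ A i) = α} κ.ord)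
    (hC0 : Cs 0 = ∅)
    (hCsucc : ∀ β, Cs (β + 1) = {β})
    (hComegasucc : ∀ β < κ.ord, ¬ Order.IsSuccLimit β → 0 < β →
      Cs (Ordinal.omega0 * β) ⊆ Set.Iio (Ordinal.omega0 * β) ∧
      ∃ f : ℕ → Ordinal, StrictMono f ∧ Set.range f = Cs (Ordinal.omega0 * β) ∧
        ∀ δ < Ordinal.omega0 * β, ∃ n, δ ≤ f n)
    (hComegalim : ∀ β < κ.ord, Order.IsSuccLimit β →
      Cs (Ordinal.omega0 * β) = (fun γ => Ordinal.omega0 * γ) '' (D β)) :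
    (∀ α < κ.ord, Order.IsSuccLimit α → ClubIn (Cs α) α) ∧
    (∀ α < κ.ord, ∀ β ∈ accOf (Cs α), Cs β = Cs α ∩ Set.Iio β) ∧
    (∀ β < κ.ord, ∃ α, β < α ∧ α < κ.ord ∧
      ∃ f : ℕ → Ordinal, StrictMono f ∧ Set.range f = Cs α) ∧
    (∀ B : Ordinal → Set Ordinal,
      (∀ i < κ.ord, B i ⊆ {δ | δ < κ.ord ∧ Order.IsSuccLimit δ} ∧ ∀ β < κ.ord, ∃ γ ∈ B i, β ≤ γ) →
      StatIn {α | α < κ.ord ∧ ∀ i < α, sSup (naccOf (Cs α) ∩ B i) = α} κ.ord) := by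
  have hκ : ℵ₀ < κ.ord.cof := by rwa [hreg.cof_ord]
  have hκω : ∀ β < κ.ord, ω * β < κ.ord :=
    fun β => isPrincipal_mul_ord hunc.le (lt_ord.2 (card_omega0 ▸ hunc))
  have hComegaseq : ∀ β < κ.ord, ¬ IsSuccLimit β → 0 < β →
      ∃ f : ℕ → Ordinal, StrictMono f ∧ range f = Cs (ω * β) := fun β hβ hlim hβ0 =>
    let ⟨_, f, hf, hrange, _⟩ := hComegasucc β hβ hlim hβ0
    ⟨f, hf, hrange⟩
  exact ⟨fun α => OmegaStretch.clubIn hD1 hComegasucc hComegalim,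
    fun α hα β => OmegaStretch.eq_inter_Iio_of_mem_accOf hD1 hD2 hC0 hCsucc hComegaseq
      hComegalim hα,
    fun β => OmegaStretch.exists_gt_eq_range (one_lt_cof_iff.1 (one_lt_aleph0.trans hκ)) hκω
      hComegaseq,
    fun B => OmegaStretch.statIn_hitting hκ hκω hD3 hComegalim⟩
end
end

section
/- Suppose ⟨C_α : α < κ⟩ is a coherent C-sequence (for limit α, C_α club in α; C_ᾱ = C_α ∩ ᾱ for ᾱ ∈ acc(C_α)) with the hitting property: for every sequence ⟨B_i : i < κ⟩ of cofinal subsets of κ there are stationarily many α such that sup(nacc(C_α) ∩ B_i) = α for all i < α. Then there is no club D ⊆ κ such that D ∩ α = C_α for every α ∈ acc(D). -/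
/-!
Suppose the club `D` threads the sequence. Since `κ` has uncountable cofinality, `acc(D)` is
again club, so the hitting property for the constant sequence `B_i = acc(D)` yields some
`α ∈ acc(D)` with `sup(nacc(C_α) ∩ acc(D)) = α`. But `C_α = D ∩ α`, and every point of `acc(D)`
below `α` is a limit point of `D ∩ α`, so `nacc(C_α) ∩ acc(D)` is empty and its supremum is `0`.
-/

noncomputable section
open Cardinal Set

open Order

theorem sSup_inter_Iio_eq_of_subset {A B : Set Ordinal} {β : Ordinal} (hAB : A ⊆ B)
    (hA : sSup (A ∩ Iio β) = β) : sSup (B ∩ Iio β) = β := by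
  have hbdd : BddAbove (B ∩ Iio β) := ⟨β, fun _ hx => hx.2.le⟩
  refine le_antisymm (csSup_le' fun _ hx => hx.2.le) ?_
  calc β = sSup (A ∩ Iio β) := hA.symm
    _ ≤ sSup (B ∩ Iio β) := csSup_le_csSup' hbdd (inter_subset_inter_left _ hAB)

theorem accOf_inter_Iio (D : Set Ordinal) (α : Ordinal) :
    accOf (D ∩ Iio α) = accOf D ∩ Iio α := by
  ext β
  constructor
  · rintro ⟨⟨hβD, hβα⟩, hβ0, hsup⟩
    exact ⟨⟨hβD, hβ0, sSup_inter_Iio_eq_of_subset inter_subset_left hsup⟩, hβα⟩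
  · rintro ⟨⟨hβD, hβ0, hsup⟩, hβα⟩
    have : D ∩ Iio α ∩ Iio β = D ∩ Iio β := by
      rw [inter_assoc, Iio_inter_Iio, min_eq_right (le_of_lt hβα)]
    exact ⟨⟨hβD, hβα⟩, hβ0, this ▸ hsup⟩

theorem naccOf_inter_Iio_inter_accOf (D : Set Ordinal) (α : Ordinal) :
    naccOf (D ∩ Iio α) ∩ accOf D = ∅ := by
  ext β
  simp only [naccOf, accOf_inter_Iio, mem_inter_iff, mem_sdiff, mem_empty_iff_false, iff_false]
  rintro ⟨⟨⟨-, hβα⟩, hβacc⟩, hβD⟩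
  exact hβacc ⟨hβD, hβα⟩

namespace ClubIn

variable {D : Set Ordinal} {o : Ordinal}

theorem exists_gt (hD : ClubIn D o) (ho : IsSuccLimit o) {β : Ordinal} (hβ : β < o) :
    ∃ γ ∈ D, β < γ := by
  obtain ⟨γ, hγD, hγ⟩ := hD.2.1 (succ β) (ho.succ_lt hβ)
  exact ⟨γ, hγD, (lt_succ β).trans_le hγ⟩

theorem iSup_mem_accOf (hD : ClubIn D o) (ho : ℵ₀ < o.cof) {g : ℕ → Ordinal}
    (hgD : ∀ n, g n ∈ D) (hg : ∀ n, g n < g (n + 1)) : ⨆ n, g n ∈ accOf D := by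
  have hbdd : BddAbove (range g) := ⟨o, by rintro _ ⟨n, rfl⟩; exact (hD.1 (hgD n)).le⟩
  have hlt : ∀ n, g n < ⨆ n, g n := fun n => (hg n).trans_le (le_ciSup hbdd (n + 1))
  have hpos : 0 < ⨆ n, g n := (hlt 0).pos
  have hsup : sSup (D ∩ Iio (⨆ n, g n)) = ⨆ n, g n := by
    have hbdd' : BddAbove (D ∩ Iio (⨆ n, g n)) := ⟨_, fun _ hx => hx.2.le⟩
    refine le_antisymm (csSup_le' fun _ hx => hx.2.le) (ciSup_le fun n => ?_)
    exact le_csSup hbdd' ⟨hgD n, hlt n⟩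
  have hlt_o : ⨆ n, g n < o :=
    Ordinal.lift_iSup_lt_of_lt_cof (by simpa [← Ordinal.lift_cof] using ho) fun n => hD.1 (hgD n)
  exact ⟨hD.2.2 _ hlt_o hpos hsup, hpos, hsup⟩

theorem exists_accOf_ge (hD : ClubIn D o) (ho : ℵ₀ < o.cof) {β : Ordinal} (hβ : β < o) :
    ∃ γ ∈ accOf D, β ≤ γ := by
  have hlim : IsSuccLimit o := Ordinal.one_lt_cof_iff.1 (one_lt_aleph0.trans ho)
  choose next hnextD hlt_next using fun x : Iio o => hD.exists_gt hlim x.2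
  let seq : ℕ → Iio o := fun n =>
    Nat.rec (motive := fun _ => Iio o) ⟨β, hβ⟩ (fun _ x => ⟨next x, hD.1 (hnextD x)⟩) n
  have hseq : ∀ n, (seq n).1 < (seq (n + 1)).1 := fun n => hlt_next (seq n)
  have hbdd : BddAbove (range fun n => (seq (n + 1)).1) :=
    ⟨o, by rintro _ ⟨n, rfl⟩; exact (seq (n + 1)).2.le⟩
  refine ⟨_, hD.iSup_mem_accOf ho (fun n => hnextD (seq n)) (fun n => hseq (n + 1)), ?_⟩
  exact (hseq 0).le.trans (le_ciSup hbdd 0)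

theorem mem_accOf_of_sSup_eq (hD : ClubIn D o) {β : Ordinal} (hβ : β < o) (hβ0 : 0 < β)
    (hsup : sSup (accOf D ∩ Iio β) = β) : β ∈ accOf D := by
  have hDsup := sSup_inter_Iio_eq_of_subset (fun _ hx => hx.1) hsup
  exact ⟨hD.2.2 β hβ hβ0 hDsup, hβ0, hDsup⟩

protected theorem accOf (hD : ClubIn D o) (ho : ℵ₀ < o.cof) : ClubIn (accOf D) o :=
  ⟨fun _ hx => hD.1 hx.1, fun _ hβ => hD.exists_accOf_ge ho hβ,
    fun _ hβ hβ0 hsup => hD.mem_accOf_of_sSup_eq hβ hβ0 hsup⟩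

end ClubIn

theorem stmt11_general (κ : Cardinal.{0}) (hreg : κ.IsRegular) (hunc : Cardinal.aleph0 < κ)
    (Cs : Ordinal → Set Ordinal)
    (h3 : ∀ B : Ordinal → Set Ordinal,
      (∀ i < κ.ord, B i ⊆ Set.Iio κ.ord ∧ ∀ β < κ.ord, ∃ γ ∈ B i, β ≤ γ) →
      StatIn {α | α < κ.ord ∧ ∀ i < α, sSup (naccOf (Cs α) ∩ B i) = α} κ.ord) :
    ¬ ∃ D : Set Ordinal, ClubIn D κ.ord ∧ ∀ α ∈ accOf D, D ∩ Set.Iio α = Cs α := by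
  rintro ⟨D, hD, hthread⟩
  have hacc : ClubIn (accOf D) κ.ord := hD.accOf (by rwa [hreg.cof_ord])
  obtain ⟨α, ⟨-, hhit⟩, hα⟩ := h3 (fun _ => accOf D) (fun _ _ => ⟨hacc.1, hacc.2.1⟩) _ hacc
  have hsup := hhit 0 hα.2.1
  rw [← hthread α hα, naccOf_inter_Iio_inter_accOf, csSup_empty] at hsup
  exact hα.2.1.ne hsup

/-- A coherent `C`-sequence with the hitting property has no thread: there is no club
`D ⊆ κ` with `D ∩ α = C_α` for every `α ∈ acc(D)`. -/
theorem stmt11 (κ : Cardinal.{0}) (hreg : κ.IsRegular) (hunc : Cardinal.aleph0 < κ)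
    (Cs : Ordinal → Set Ordinal)
    (h1 : ∀ α < κ.ord, Order.IsSuccLimit α → ClubIn (Cs α) α)
    (h2 : ∀ α < κ.ord, ∀ β ∈ accOf (Cs α), Cs β = Cs α ∩ Set.Iio β)
    (h3 : ∀ B : Ordinal → Set Ordinal,
      (∀ i < κ.ord, B i ⊆ Set.Iio κ.ord ∧ ∀ β < κ.ord, ∃ γ ∈ B i, β ≤ γ) →
      StatIn {α | α < κ.ord ∧ ∀ i < α, sSup (naccOf (Cs α) ∩ B i) = α} κ.ord) :
    ¬ ∃ D : Set Ordinal, ClubIn D κ.ord ∧ ∀ α ∈ accOf D, D ∩ Set.Iio α = Cs α :=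
  stmt11_general κ hreg hunc Cs h3
end
end

section
/- Let T ⊆ {}^{<κ}ω be a ϱ-coherent streamlined κ-tree such that each limit level T_α equals {η * b^α : η ∈ ϱ, dom(η) ⊆ α} \ {∅} for some distinguished node b^α : α → ω with (b^α)⁻¹(0) = C_α, where ⟨C_α⟩ is a coherent C-sequence with no thread (no club D with D ∩ α = C_α for all α ∈ acc(D)). Then T has no branch of size κ, i.e., T is κ-Aronszajn. -/
noncomputable section
open Cardinal Set

/-!
Suppose `d` is a branch. At each limit `α < κ` the node `d ↾ α` lies on level `α`, so it equals
`η_α * b^α` with `dom η_α ⊆ α`; above `ε_α = max (dom η_α) < α` it therefore differs from `b^α` by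
the constant `c_α = η_α(ε_α)`. Pressing down on `α ↦ ε_α` and then pigeonholing `c_α ∈ ℤ` gives a
cofinal set `S` of limits sharing `ε₀` and `c₀` (an unbounded fiber is all that is needed, so a
closure-point argument replaces Fodor's lemma). For `α ∈ S`, above `ε₀` the set
`C_α = (b^α)⁻¹(0)` is `{γ < α | d γ = c₀}`, so the `C_α` with `α ∈ S` cohere, and their union is a
club thread through `⟨C_α⟩`.
-/

open Order

section Cofinal

def CofinalBelow (S : Set Ordinal) (o : Ordinal) : Prop :=
  S ⊆ Iio o ∧ ∀ β < o, ∃ α ∈ S, β < α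

variable {κ : Cardinal.{0}}

theorem exists_isSuccLimit_closed (hreg : κ.IsRegular) (hunc : ℵ₀ < κ)
    {g : Ordinal → Ordinal} (hg : ∀ γ < κ.ord, g γ < κ.ord) :
    ∃ α < κ.ord, IsSuccLimit α ∧ ∀ γ < α, g γ < α := by
  have hκ : IsSuccLimit κ.ord := isSuccLimit_ord hreg.aleph0_le
  set f : Ordinal → Ordinal := fun x => succ (max x (⨆ γ : Iio x, g γ))
  have hf_lt : ∀ x < κ.ord, f x < κ.ord := by
    intro x hx
    refine hκ.succ_lt (max_lt hx (Ordinal.lift_iSup_lt_of_lt_cof ?_ fun γ => hg γ (γ.2.trans hx)))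
    rwa [← Ordinal.lift_cof, hreg.cof_ord, mk_Iio_ordinal, lift_lift, lift_lt, ← lt_ord]
  have hlt_f : ∀ x, x < f x := fun x => lt_succ_of_le (le_max_left _ _)
  have hg_lt_f : ∀ x, ∀ γ < x, g γ < f x := fun x γ hγ =>
    lt_succ_of_le ((Ordinal.le_iSup (fun γ : Iio x => g γ) ⟨γ, hγ⟩).trans (le_max_right _ _))
  have hstep : ∀ γ < Ordinal.nfp f 0, ∃ y, γ < y ∧ f y ≤ Ordinal.nfp f 0 := fun γ hγ => by
    obtain ⟨n, hn⟩ := Ordinal.lt_nfp_iff.1 hγ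
    refine ⟨f^[n] 0, hn, ?_⟩
    simpa [Function.iterate_succ_apply'] using Ordinal.iterate_le_nfp f 0 (n + 1)
  refine ⟨Ordinal.nfp f 0, nfp_lt_ord_of_isRegular hreg hunc.ne' hf_lt hκ.bot_lt, ?_, ?_⟩
  · refine Ordinal.isSuccLimit_iff.2 ⟨?_, isSuccPrelimit_of_succ_lt fun γ hγ => ?_⟩
    · exact ((hlt_f 0).trans_le (by simpa using Ordinal.iterate_le_nfp f 0 1)).ne'
    · obtain ⟨y, hy, hfy⟩ := hstep γ hγ
      exact (succ_le_of_lt hy).trans_lt ((hlt_f y).trans_le hfy)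
  · intro γ hγ
    obtain ⟨y, hy, hfy⟩ := hstep γ hγ
    exact (hg_lt_f y γ hy).trans_le hfy

theorem CofinalBelow.exists_fiber (hreg : κ.IsRegular) {S : Set Ordinal}
    (hS : CofinalBelow S κ.ord) {ι : Type} (hι : #ι < κ) (c : Ordinal → ι) :
    ∃ i, CofinalBelow (S ∩ c ⁻¹' {i}) κ.ord := by
  by_contra! hbdd
  have hbound : ∀ i, ∃ β < κ.ord, ∀ α ∈ S, c α = i → α ≤ β := fun i => by
    have := hbdd i
    simp only [CofinalBelow, inter_subset_left.trans hS.1, true_and, not_forall, not_exists,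
      not_and, not_lt] at this
    obtain ⟨β, hβ, h⟩ := this
    exact ⟨β, hβ, fun α hα hc => h α ⟨hα, hc⟩⟩
  choose g hg_lt hg using hbound
  obtain ⟨α, hα, hlt⟩ := hS.2 _ (Ordinal.iSup_lt_of_lt_cof (by rwa [hreg.cof_ord]) hg_lt)
  exact (hlt.trans_le (hg _ α hα rfl)).not_ge (Ordinal.le_iSup g (c α))

theorem exists_cofinalBelow_fiber_of_regressive (hreg : κ.IsRegular) (hunc : ℵ₀ < κ)
    {F : Ordinal → Ordinal} (hF : ∀ α < κ.ord, IsSuccLimit α → F α < α) :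
    ∃ ε, CofinalBelow {α | α < κ.ord ∧ IsSuccLimit α ∧ F α = ε} κ.ord := by
  by_contra! hbdd
  have hbound : ∀ ε, ∃ β < κ.ord, ∀ α < κ.ord, IsSuccLimit α → F α = ε → α ≤ β := fun ε => by
    have := hbdd ε
    simp only [CofinalBelow, not_and, not_forall, not_exists, not_lt] at this
    obtain ⟨β, hβ, h⟩ := this fun α hα => hα.1
    exact ⟨β, hβ, fun α hα hlim hF => h α ⟨hα, hlim, hF⟩⟩
  choose g hg_lt hg using hbound
  obtain ⟨α, hα, hlim, hclosed⟩ := exists_isSuccLimit_closed hreg hunc fun ε _ => hg_lt ε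
  exact (hclosed _ (hF α hα hlim)).not_ge (hg _ α hα hlim rfl)

end Cofinal

section CSequence

variable {θ : Ordinal} {Cs : Ordinal → Set Ordinal}

theorem ClubIn.mem_accOf_of_cofinal {C : Set Ordinal} {α α' : Ordinal} (hC : ClubIn C α')
    (hlt : α < α') (hα : IsSuccLimit α) (hunb : ∀ β < α, ∃ γ ∈ C, β < γ ∧ γ < α) : α ∈ accOf C := by
  have hsup : sSup (C ∩ Iio α) = α := by
    refine csSup_eq_of_forall_le_of_forall_lt_exists_gt ?_ (fun γ hγ => hγ.2.le) fun β hβ => ?_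
    · obtain ⟨γ, hγ, -, hγα⟩ := hunb 0 hα.pos
      exact ⟨γ, hγ, hγα⟩
    · obtain ⟨γ, hγ, hβγ, hγα⟩ := hunb β hβ
      exact ⟨γ, ⟨hγ, hγα⟩, hβγ⟩
  exact ⟨hC.2.2 α hlt hα.pos hsup, hα.pos, hsup⟩

theorem eq_inter_Iio_of_eventually_subset
    (hCcoh : ∀ α < θ, ∀ β ∈ accOf (Cs α), Cs β = Cs α ∩ Iio β)
    {α α' ε : Ordinal} (hα' : α' < θ) (hlt : α < α') (hα : IsSuccLimit α)
    (hC : ClubIn (Cs α) α) (hC' : ClubIn (Cs α') α') (hε : ε < α)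
    (hsub : ∀ γ ∈ Cs α, ε ≤ γ → γ ∈ Cs α') : Cs α = Cs α' ∩ Iio α := by
  refine hCcoh α' hα' α (hC'.mem_accOf_of_cofinal hlt hα fun β hβ => ?_)
  obtain ⟨γ, hγ, hle⟩ := hC.2.1 (max (succ β) ε) (max_lt (hα.succ_lt hβ) hε)
  exact ⟨γ, hsub γ hγ (le_of_max_le_right hle), succ_le_iff.1 (le_of_max_le_left hle), hC.1 hγ⟩

variable {S : Set Ordinal}

theorem biUnion_inter_Iio_eq (hSc : ∀ α ∈ S, ∀ α' ∈ S, α < α' → Cs α = Cs α' ∩ Iio α)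
    {α β : Ordinal} (hα : α ∈ S) (hβ : β ≤ α) :
    (⋃ α' ∈ S, Cs α') ∩ Iio β = Cs α ∩ Iio β := by
  ext γ
  simp only [mem_inter_iff, mem_iUnion₂, mem_Iio]
  refine ⟨fun ⟨⟨α'', hα'', hγ⟩, hγβ⟩ => ⟨?_, hγβ⟩, fun ⟨hγ, hγβ⟩ => ⟨⟨α, hα, hγ⟩, hγβ⟩⟩
  rcases lt_trichotomy α'' α with h | rfl | h
  · exact ((hSc α'' hα'' α hα h).subset hγ).1
  · exact hγ
  · exact (hSc α hα α'' hα'' h).symm.subset ⟨hγ, hγβ.trans_le hβ⟩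

theorem clubIn_biUnion (hclub : ∀ α ∈ S, ClubIn (Cs α) α)
    (hSc : ∀ α ∈ S, ∀ α' ∈ S, α < α' → Cs α = Cs α' ∩ Iio α) (hS : CofinalBelow S θ) :
    ClubIn (⋃ α ∈ S, Cs α) θ := by
  refine ⟨?_, fun β hβ => ?_, fun β hβ hpos hsup => ?_⟩
  · simp only [iUnion_subset_iff]
    exact fun α hα γ hγ => mem_Iio.2 (((hclub α hα).1 hγ).trans (hS.1 hα))
  · obtain ⟨α, hα, hβα⟩ := hS.2 β hβ
    obtain ⟨γ, hγ, hβγ⟩ := (hclub α hα).2.1 β hβα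
    exact ⟨γ, mem_biUnion hα hγ, hβγ⟩
  · obtain ⟨α, hα, hβα⟩ := hS.2 β hβ
    rw [biUnion_inter_Iio_eq hSc hα hβα.le] at hsup
    exact mem_biUnion hα ((hclub α hα).2.2 β hβα hpos hsup)

theorem exists_thread_of_coherent_on_cofinal
    (hCcoh : ∀ α < θ, ∀ β ∈ accOf (Cs α), Cs β = Cs α ∩ Iio β) (hS : CofinalBelow S θ)
    (hclub : ∀ α ∈ S, ClubIn (Cs α) α)
    (hSc : ∀ α ∈ S, ∀ α' ∈ S, α < α' → Cs α = Cs α' ∩ Iio α) :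
    ∃ D : Set Ordinal, ClubIn D θ ∧ ∀ α ∈ accOf D, D ∩ Iio α = Cs α := by
  have hD := clubIn_biUnion hclub hSc hS
  refine ⟨_, hD, fun γ ⟨hγD, hγpos, hγsup⟩ => ?_⟩
  obtain ⟨α, hα, hγα⟩ := hS.2 γ (hD.1 hγD)
  have hγ : γ ∈ Cs α := ((biUnion_inter_Iio_eq hSc hα le_rfl).subset ⟨hγD, hγα⟩).1
  rw [biUnion_inter_Iio_eq hSc hα hγα.le] at hγsup ⊢
  exact (hCcoh α (hS.1 hα) γ ⟨hγ, hγpos, hγsup⟩).symm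

end CSequence

section Tree

variable {κ : Cardinal.{0}}

theorem RhoMod.anchor_eq_max' (η : RhoMod κ) {γ : Ordinal}
    (h : η.x.max' ⟨0, η.zero_mem⟩ ≤ γ) : η.anchor γ = η.x.max' ⟨0, η.zero_mem⟩ := by
  unfold RhoMod.anchor
  refine le_antisymm ?_ (Finset.le_max' _ _ ?_)
  · exact Finset.max'_le _ _ _ fun _ hy => Finset.le_max' _ _ (Finset.filter_subset _ _ hy)
  · rw [Finset.mem_filter]
    exact ⟨Finset.max'_mem _ _, h⟩

theorem rhoAct_apply_of_eq_some (η : RhoMod κ) {t : ONode} {γ : Ordinal} {m : ℕ}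
    (h : t γ = some m) : rhoAct η t γ = some (η.f (η.anchor γ) + m).toNat := by
  simp [rhoAct, h]

def initSeg (d : Ordinal → ℕ) (α : Ordinal) : ONode :=
  fun γ => if γ < α then some (d γ) else none

theorem nodeDom_initSeg (d : Ordinal → ℕ) (α : Ordinal) : nodeDom (initSeg d α) α := by
  intro γ
  by_cases h : γ < α <;> simp [initSeg, h]

theorem exists_shift_of_initSeg_eq_rhoAct {η : RhoMod κ} {s : ONode} {d : Ordinal → ℕ}
    {α : Ordinal} (hsupp : ∀ γ ∈ η.x, γ < α) (hdef : rhoDefined η s)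
    (heq : initSeg d α = rhoAct η s) :
    ∃ ε < α, ∃ c : ℤ, ∀ γ m, ε ≤ γ → γ < α → s γ = some m → c + m = d γ := by
  refine ⟨η.x.max' ⟨0, η.zero_mem⟩, hsupp _ (Finset.max'_mem _ _),
    η.f (η.x.max' ⟨0, η.zero_mem⟩), fun γ m hεγ hγ hm => ?_⟩
  have hnonneg := hdef γ m hm
  have hγ_act : some (d γ) = some (η.f (η.anchor γ) + m).toNat := by
    rw [← rhoAct_apply_of_eq_some η hm, ← heq]
    exact (if_pos hγ).symm
  rw [η.anchor_eq_max' hεγ] at hγ_act hnonneg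
  rw [Option.some_inj.1 hγ_act, Int.toNat_of_nonneg hnonneg]

end Tree

theorem stmt12_general (κ : Cardinal.{0}) (hreg : κ.IsRegular) (hunc : Cardinal.aleph0 < κ)
    (T : Set ONode)
    (Cs : Ordinal → Set Ordinal)
    (hCseq : ∀ α < κ.ord, Order.IsSuccLimit α → ClubIn (Cs α) α)
    (hCcoh : ∀ α < κ.ord, ∀ β ∈ accOf (Cs α), Cs β = Cs α ∩ Set.Iio β)
    (hnothread : ¬ ∃ D : Set Ordinal, ClubIn D κ.ord ∧ ∀ α ∈ accOf D, D ∩ Set.Iio α = Cs α)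
    (b : Ordinal → ONode)
    (hb : ∀ α < κ.ord, Order.IsSuccLimit α →
      nodeDom (b α) α ∧ {γ | b α γ = some 0} = Cs α ∧
      levelSet T α = {t | (∃ η : RhoMod κ, (∀ γ ∈ η.x, γ < α) ∧ rhoDefined η (b α) ∧
        t = rhoAct η (b α)) ∧ t ≠ (fun _ => none)}) :
    ¬ ∃ d : Ordinal → ℕ,
      ∀ α < κ.ord, (fun γ => if γ < α then some (d γ) else none) ∈ T := by
  rintro ⟨d, hd⟩
  have hshift : ∀ α < κ.ord, IsSuccLimit α →
      ∃ ε < α, ∃ c : ℤ, ∀ γ m, ε ≤ γ → γ < α → b α γ = some m → c + m = d γ := by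
    intro α hα hlim
    have hmem : initSeg d α ∈ levelSet T α := ⟨hd α hα, nodeDom_initSeg d α⟩
    rw [(hb α hα hlim).2.2] at hmem
    obtain ⟨η, hsupp, hdef, heq⟩ := hmem.1
    exact exists_shift_of_initSeg_eq_rhoAct hsupp hdef heq
  choose! ε hε c hc using hshift
  obtain ⟨ε₀, hε₀⟩ := exists_cofinalBelow_fiber_of_regressive hreg hunc hε
  obtain ⟨c₀, hS⟩ := hε₀.exists_fiber hreg (mk_int.trans_lt hunc) c
  set S := {α | α < κ.ord ∧ IsSuccLimit α ∧ ε α = ε₀} ∩ c ⁻¹' {c₀}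
  have hclub : ∀ α ∈ S, ClubIn (Cs α) α := fun α hα => hCseq α hα.1.1 hα.1.2.1
  have hmem_iff : ∀ α ∈ S, ∀ γ, ε₀ ≤ γ → γ < α → (γ ∈ Cs α ↔ (d γ : ℤ) = c₀) := by
    rintro α ⟨⟨hα, hlim, rfl⟩, rfl⟩ γ hεγ hγ
    obtain ⟨m, hm⟩ := Option.isSome_iff_exists.1 (((hb α hα hlim).1 γ).2 hγ)
    have hdγ := hc α hα hlim γ m hεγ hγ hm
    rw [← (hb α hα hlim).2.1, mem_ofPred_eq, hm, Option.some_inj]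
    omega
  refine hnothread (exists_thread_of_coherent_on_cofinal hCcoh hS hclub
    fun α hα α' hα' hlt => ?_)
  refine eq_inter_Iio_of_eventually_subset hCcoh (hS.1 hα') hlt hα.1.2.1 (hclub α hα) (hclub α' hα')
    (hα.1.2.2 ▸ hε α hα.1.1 hα.1.2.1) fun γ hγ hεγ => ?_
  have hγα := (hclub α hα).1 hγ
  exact (hmem_iff α' hα' γ hεγ (hγα.trans hlt)).2 ((hmem_iff α hα γ hεγ hγα).1 hγ)

/-- A `ϱ`-coherent streamlined `κ`-tree whose limit levels are generated by distinguished
nodes `b^α` with `(b^α)⁻¹(0) = C_α`, for an unthreaded coherent `C`-sequence `⟨C_α⟩`,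
has no branch of size `κ`: it is `κ`-Aronszajn. -/
theorem stmt12 (κ : Cardinal.{0}) (hreg : κ.IsRegular) (hunc : Cardinal.aleph0 < κ)
    (T : Set ONode) (hT : IsStreamTree κ T) (hcoh : RhoCoherent κ T)
    (Cs : Ordinal → Set Ordinal)
    (hCseq : ∀ α < κ.ord, Order.IsSuccLimit α → ClubIn (Cs α) α)
    (hCcoh : ∀ α < κ.ord, ∀ β ∈ accOf (Cs α), Cs β = Cs α ∩ Set.Iio β)
    (hnothread : ¬ ∃ D : Set Ordinal, ClubIn D κ.ord ∧ ∀ α ∈ accOf D, D ∩ Set.Iio α = Cs α)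
    (b : Ordinal → ONode)
    (hb : ∀ α < κ.ord, Order.IsSuccLimit α →
      nodeDom (b α) α ∧ {γ | b α γ = some 0} = Cs α ∧
      levelSet T α = {t | (∃ η : RhoMod κ, (∀ γ ∈ η.x, γ < α) ∧ rhoDefined η (b α) ∧
        t = rhoAct η (b α)) ∧ t ≠ (fun _ => none)}) :
    ¬ ∃ d : Ordinal → ℕ,
      ∀ α < κ.ord, (fun γ => if γ < α then some (d γ) else none) ∈ T :=
  stmt12_general κ hreg hunc T Cs hCseq hCcoh hnothread b hb
end
end

section
/- Let (S,<_S,<_lS) and (T,<_T,<_lT) be lexicographically ordered Hausdorff κ-Aronszajn trees, X ⊆ S and Y ⊆ T both of size κ, and π : (X,<_lS) → (Y,<_lT) an order isomorphism. Then there exists a club C ⊆ κ and a map f : (X_↓)↾C → (Y_↓)↾C which is simultaneously a tree isomorphism and a lexicographic-order isomorphism, and f agrees with π in the sense that π''(x^↑ ∩ X) = f(x)^↑ ∩ Y for all x ∈ (X_↓)↾C. -/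
/-!
Call a level `α` good if it is a limit, `π` preserves "height `< α`" on `X`, and for every
node `s` of `X_↓` of height `α` the image `π '' (X ∩ s^↑)` is a cone `Y ∩ t^↑` with `t` of
height `α`, and symmetrically for `π⁻¹`. On good levels `f s := t` is forced, and since a cone
determines its root, `f` is an isomorphism for both orders.

Good levels are closed: at a limit of good levels the roots matched below glue together by the
Hausdorff property. They are unbounded: a limit level `α` respecting heights fails only if the
image of some cone at level `α` has elements above two distinct nodes `r <_l r'` of one height
`δ < α`. For a fixed pair `(r, r')` two such cones intersect, because `π` respects `<_l`
and cones are `<_l`-convex, so their roots form a chain, which by the Aronszajn property lives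
on boundedly many levels. Levels have size `< κ`, so for each `δ` these bad levels are
bounded, and closing under these bounds (and under height bounds for `π` and `π⁻¹`) along an
`ω`-sequence yields good levels above any given one.
-/

noncomputable section
open Cardinal Set

/-- A lexicographically ordered Hausdorff `κ`-Aronszajn tree: a `κ`-tree `(X, tlt)` with
height function `ht`, Hausdorff at limit levels, with no chain of size `κ`, together with a
linear order `llt` extending the tree order consistently (incomparable nodes are ordered
according to their behaviour above their meet). -/
structure LexKTree (κ : Cardinal.{0}) where
  X : Type 1
  tlt : X → X → Prop
  ht : X → Ordinal
  llt : X → X → Prop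
  tlt_irrefl : ∀ a, ¬ tlt a a
  tlt_trans : ∀ a b c, tlt a b → tlt b c → tlt a c
  ht_lt : ∀ x, ht x < κ.ord
  ht_mono : ∀ x y, tlt x y → ht x < ht y
  level_ne : ∀ β < κ.ord, ∃ x, ht x = β
  level_small : ∀ β < κ.ord, Cardinal.mk ↥{x | ht x = β} < Cardinal.lift.{1} κ
  pred_ex : ∀ x, ∀ β < ht x, ∃! y, tlt y x ∧ ht y = β
  pred_lin : ∀ x y z, tlt y x → tlt z x → tlt y z ∨ y = z ∨ tlt z y
  hausdorff : ∀ x y, ht x = ht y → Order.IsSuccLimit (ht x) → (∀ z, tlt z x ↔ tlt z y) → x = y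
  aronszajn : ¬ ∃ B : Set X, (∀ a ∈ B, ∀ c ∈ B, a = c ∨ tlt a c ∨ tlt c a) ∧
    Cardinal.lift.{1} κ ≤ Cardinal.mk ↥B
  llt_irrefl : ∀ a, ¬ llt a a
  llt_trans : ∀ a b c, llt a b → llt b c → llt a c
  llt_total : ∀ a b, a = b ∨ llt a b ∨ llt b a
  llt_of_tlt : ∀ a b, tlt a b → llt a b
  llt_coherent : ∀ x y u v, ¬ tlt x y → ¬ tlt y x → x ≠ y → llt x y →
    (x = u ∨ tlt x u) → (y = v ∨ tlt y v) → llt u v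

namespace Cardinal

variable {κ : Cardinal.{0}}

theorem mk_Iio_lt_lift_of_lt_ord {β : Ordinal.{0}} (hβ : β < κ.ord) :
    #(Iio β) < Cardinal.lift.{1} κ := by
  rw [mk_Iio_ordinal, lift_lt]
  exact lt_ord.1 hβ

theorem IsRegular.exists_lt_ord_forall_lt (hreg : κ.IsRegular) {ι : Type 1}
    (hι : #ι < Cardinal.lift.{1} κ) {f : ι → Ordinal.{0}} (hf : ∀ i, f i < κ.ord) :
    ∃ γ < κ.ord, ∀ i, f i < γ := by
  refine ⟨⨆ i, f i + 1, Ordinal.lift_iSup_add_one_lt_of_lt_cof ?_ hf, fun i => ?_⟩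
  · rwa [lift_id'.{0, 1}, ← Ordinal.lift_cof, hreg.cof_ord]
  · have hbdd : BddAbove (range fun i => f i + 1) := ⟨κ.ord, by
      rintro _ ⟨j, rfl⟩
      exact ((isSuccLimit_ord hreg.aleph0_le).add_one_lt (hf j)).le⟩
    exact (Order.lt_add_one_iff.2 le_rfl).trans_le (le_ciSup hbdd i)

theorem IsRegular.lift_le_mk_of_forall_exists_le (hreg : κ.IsRegular) {I : Set Ordinal.{0}}
    (hI : I ⊆ Iio κ.ord) (hcof : ∀ β < κ.ord, ∃ α ∈ I, β ≤ α) : Cardinal.lift.{1} κ ≤ #I := by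
  by_contra! hlt
  obtain ⟨γ, hγ, hbound⟩ := hreg.exists_lt_ord_forall_lt hlt (f := Subtype.val) fun α => hI α.2
  obtain ⟨α, hα, hγα⟩ := hcof γ hγ
  exact (hbound ⟨α, hα⟩).not_ge hγα

theorem IsRegular.exists_isSuccLimit_forall_lt (hreg : κ.IsRegular) (hunc : ℵ₀ < κ)
    {h : Ordinal.{0} → Ordinal.{0}} (hh : ∀ β < κ.ord, h β < κ.ord) {β₀ : Ordinal.{0}}
    (hβ₀ : β₀ < κ.ord) :
    ∃ α, β₀ < α ∧ α < κ.ord ∧ Order.IsSuccLimit α ∧ ∀ β < α, h β < α := by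
  have hstep : ∀ γ < κ.ord, ∃ γ' < κ.ord, γ < γ' ∧ ∀ β < γ, h β < γ' := by
    intro γ hγ
    obtain ⟨γ₁, hγ₁, hbound⟩ := hreg.exists_lt_ord_forall_lt (mk_Iio_lt_lift_of_lt_ord hγ)
      (f := fun β : Iio γ => h β) fun β => hh β (β.2.trans hγ)
    exact ⟨max γ₁ (γ + 1), max_lt hγ₁ ((isSuccLimit_ord hreg.aleph0_le).add_one_lt hγ),
      (Order.lt_add_one_iff.2 le_rfl).trans_le (le_max_right _ _),
      fun β hβ => (hbound ⟨β, hβ⟩).trans_le (le_max_left _ _)⟩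
  choose! g hgκ hlt hbound using hstep
  set α := Ordinal.nfp g β₀
  have hiter : ∀ n, g^[n] β₀ < κ.ord := by
    intro n
    induction n with
    | zero => exact hβ₀
    | succ n ih => rw [Function.iterate_succ_apply']; exact hgκ _ ih
  have hiter_le : ∀ n, g (g^[n] β₀) ≤ α := fun n => by
    rw [← Function.iterate_succ_apply' g]
    exact Ordinal.iterate_le_nfp g β₀ (n + 1)
  have hclosed : ∀ β < α, h β < α ∧ β + 1 < α := by
    intro β hβ
    obtain ⟨n, hn⟩ := Ordinal.lt_nfp_iff.1 hβ
    exact ⟨(hbound _ (hiter n) β hn).trans_le (hiter_le n),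
      ((Order.add_one_le_iff.2 hn).trans_lt (hlt _ (hiter n))).trans_le (hiter_le n)⟩
  have hβ₀α : β₀ < α := (hlt β₀ hβ₀).trans_le (hiter_le 0)
  refine ⟨α, hβ₀α, Ordinal.nfp_lt_ord (by rwa [hreg.cof_ord]) hgκ hβ₀,
    Order.IsSuccLimit.mk (not_isMin_of_lt hβ₀α) ?_, fun β hβ => (hclosed β hβ).1⟩
  refine Order.isSuccPrelimit_iff_succ_lt.2 fun β hβ => ?_
  rw [Order.succ_eq_add_one]
  exact (hclosed β hβ).2

end Cardinal

namespace LexKTree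

variable {κ : Cardinal.{0}}

-- With this order `S.tlt` is `<`, and `∃ x' ∈ X, x = x' ∨ S.tlt x x'` is, by definition,
-- `x ∈ lowerClosure X`.
instance (S : LexKTree κ) : PartialOrder S.X where
  le a b := a = b ∨ S.tlt a b
  lt := S.tlt
  le_refl _ := Or.inl rfl
  le_trans a b c := by
    rintro (rfl | hab) (rfl | hbc)
    exacts [Or.inl rfl, Or.inr hbc, Or.inr hab, Or.inr (S.tlt_trans a b c hab hbc)]
  le_antisymm a b := by
    rintro (rfl | hab) (hba | hba)
    exacts [rfl, rfl, hba.symm, (S.tlt_irrefl a (S.tlt_trans a b a hab hba)).elim]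
  lt_iff_le_not_ge a b := by
    refine ⟨fun hab => ⟨Or.inr hab, ?_⟩, fun ⟨hab, hba⟩ => hab.resolve_left ?_⟩
    · rintro (rfl | hba)
      exacts [S.tlt_irrefl _ hab, S.tlt_irrefl a (S.tlt_trans a b a hab hba)]
    · rintro rfl
      exact hba (Or.inl rfl)

variable {S T : LexKTree κ}

theorem strictMono_ht : StrictMono S.ht := fun a b => S.ht_mono a b

theorem le_of_le_of_ht_le {y y' z : S.X} (hy : y ≤ z) (hy' : y' ≤ z) (h : S.ht y ≤ S.ht y') :
    y ≤ y' := by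
  rcases hy'.eq_or_lt with rfl | hy'
  · exact hy
  rcases hy.eq_or_lt with rfl | hy
  · exact absurd (S.strictMono_ht hy') h.not_gt
  rcases S.pred_lin z y y' hy hy' with hlt | rfl | hlt
  exacts [le_of_lt hlt, le_rfl, absurd (S.strictMono_ht hlt) h.not_gt]

theorem lt_of_le_of_ht_lt {y y' z : S.X} (hy : y ≤ z) (hy' : y' ≤ z) (h : S.ht y < S.ht y') :
    y < y' :=
  (le_of_le_of_ht_le hy hy' h.le).lt_of_ne (by rintro rfl; exact h.false)

theorem eq_of_le_of_ht_eq {y y' z : S.X} (hy : y ≤ z) (hy' : y' ≤ z) (h : S.ht y = S.ht y') :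
    y = y' :=
  (le_of_le_of_ht_le hy hy' h.le).antisymm (le_of_le_of_ht_le hy' hy h.ge)

theorem exists_le_ht_eq (x : S.X) {β : Ordinal} (hβ : β ≤ S.ht x) : ∃ y ≤ x, S.ht y = β := by
  rcases hβ.eq_or_lt with rfl | hβ
  · exact ⟨x, le_rfl, rfl⟩
  · obtain ⟨y, ⟨hyx, hy⟩, -⟩ := S.pred_ex x β hβ
    exact ⟨y, le_of_lt hyx, hy⟩

theorem eq_of_forall_lt_imp_lt {p q : S.X} (hlim : Order.IsSuccLimit (S.ht p))
    (hpq : S.ht p = S.ht q) (h : ∀ z < p, z < q) : p = q := by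
  refine S.hausdorff p q hpq hlim fun z => ⟨h z, fun (hzq : z < q) => ?_⟩
  have hzp : S.ht z < S.ht p := hpq ▸ S.strictMono_ht hzq
  obtain ⟨y, hyp, hy⟩ := exists_le_ht_eq p hzp.le
  have hyp : y < p := hyp.lt_of_ne (by rintro rfl; exact (hy ▸ hzp).false)
  rw [← eq_of_le_of_ht_eq (h y hyp).le hzq.le hy]
  exact hyp

theorem le_of_forall_exists_le_le {t w : S.X} (hlim : Order.IsSuccLimit (S.ht t))
    (hw : S.ht t ≤ S.ht w) (h : ∀ β < S.ht t, ∃ y, β < S.ht y ∧ y ≤ t ∧ y ≤ w) : t ≤ w := by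
  obtain ⟨q, hqw, hq⟩ := exists_le_ht_eq w hw
  suffices t = q from this ▸ hqw
  refine eq_of_forall_lt_imp_lt hlim hq.symm fun z hzt => ?_
  obtain ⟨y, hzy, hyt, hyw⟩ := h _ (S.strictMono_ht hzt)
  exact (lt_of_le_of_ht_lt hzt.le hyt hzy).trans_le
    (le_of_le_of_ht_le hyw hqw (hq ▸ S.strictMono_ht.monotone hyt))

theorem llt_asymm {a b : S.X} (h : S.llt a b) : ¬ S.llt b a :=
  fun h' => S.llt_irrefl a (S.llt_trans a b a h h')

theorem not_llt_of_le {a b : S.X} (h : a ≤ b) : ¬ S.llt b a := by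
  rcases h.eq_or_lt with rfl | h
  · exact S.llt_irrefl a
  · exact llt_asymm (S.llt_of_tlt a b h)

theorem llt_iff_of_not_le {s s' x x' : S.X} (h : ¬ s ≤ s') (h' : ¬ s' ≤ s) (hx : s ≤ x)
    (hx' : s' ≤ x') : S.llt s s' ↔ S.llt x x' := by
  have hne : s ≠ s' := fun heq => h heq.le
  refine ⟨fun hl => S.llt_coherent s s' x x' (fun hlt => h (le_of_lt hlt))
    (fun hlt => h' (le_of_lt hlt)) hne hl hx hx', fun hl => ?_⟩
  rcases S.llt_total s s' with heq | hl' | hl'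
  · exact absurd heq hne
  · exact hl'
  · exact absurd (S.llt_coherent s' s x' x (fun hlt => h' (le_of_lt hlt))
      (fun hlt => h (le_of_lt hlt)) hne.symm hl' hx' hx) (llt_asymm hl)

theorem llt_of_llt_of_ht_eq {r r' u v : S.X} (hrr' : S.llt r r') (hr : S.ht r = S.ht r')
    (hu : r ≤ u) (hv : r' ≤ v) : S.llt u v := by
  have heq_of_le : ∀ {a b : S.X}, S.ht a = S.ht b → a ≤ b → a = b := fun hab hle =>
    hle.eq_or_lt.resolve_right fun hlt => (S.strictMono_ht hlt).ne hab
  refine (llt_iff_of_not_le (fun hle => ?_) (fun hle => ?_) hu hv).1 hrr'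
  · exact S.llt_irrefl r (heq_of_le hr hle ▸ hrr')
  · exact S.llt_irrefl r (heq_of_le hr.symm hle ▸ hrr')

theorem le_of_llt_of_llt {s x y z : S.X} (hx : s ≤ x) (hz : s ≤ z) (hxy : S.llt x y)
    (hyz : S.llt y z) : s ≤ y := by
  by_contra hsy
  have hys : ¬ y ≤ s := fun hys => not_llt_of_le (hys.trans hx) hxy
  rcases S.llt_total s y with rfl | hsy' | hys'
  · exact hsy le_rfl
  · exact llt_asymm hyz ((llt_iff_of_not_le hsy hys hz le_rfl).1 hsy')
  · exact llt_asymm hxy ((llt_iff_of_not_le hys hsy le_rfl hx).1 hys')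

theorem sep_eq_or_lt_eq_inter_Ici (A : Set S.X) (x : S.X) :
    {z ∈ A | z = x ∨ S.tlt x z} = A ∩ Ici x :=
  ext fun _ => and_congr_right fun _ => or_congr_left eq_comm

theorem eq_of_inter_Ici_eq {A : Set S.X} {s s' : S.X} (hs : s ∈ lowerClosure A)
    (h : A ∩ Ici s = A ∩ Ici s') (hht : S.ht s = S.ht s') : s = s' := by
  obtain ⟨a, ha, hsa⟩ := hs
  have ha' : a ∈ A ∩ Ici s' := h ▸ ⟨ha, hsa⟩
  exact eq_of_le_of_ht_eq hsa ha'.2 hht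

theorem le_iff_of_mem_lowerClosure {A : Set S.X} {s s' : S.X} (hs' : s' ∈ lowerClosure A) :
    s ≤ s' ↔ S.ht s ≤ S.ht s' ∧ A ∩ Ici s' ⊆ A ∩ Ici s := by
  refine ⟨fun h => ⟨S.strictMono_ht.monotone h, fun z hz => ⟨hz.1, h.trans hz.2⟩⟩, ?_⟩
  rintro ⟨hht, hsub⟩
  obtain ⟨a, ha, hs'a⟩ := hs'
  exact le_of_le_of_ht_le (hsub ⟨ha, hs'a⟩).2 hs'a hht

theorem mk_ht_lt_lt (hreg : κ.IsRegular) (S : LexKTree κ) {β : Ordinal} (hβ : β < κ.ord) :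
    #{x : S.X | S.ht x < β} < Cardinal.lift.{1} κ := by
  have hcover : {x : S.X | S.ht x < β} = ⋃ γ ∈ Iio β, {x : S.X | S.ht x = γ} := by
    ext
    simp
  rw [hcover, Cardinal.card_biUnion_lt_iff_forall_of_isRegular hreg.lift
    (Cardinal.mk_Iio_lt_lift_of_lt_ord hβ)]
  exact fun γ hγ => S.level_small γ (lt_trans hγ hβ)

theorem exists_ht_image_lt (hreg : κ.IsRegular) (f : S.X → T.X) {β : Ordinal}
    (hβ : β < κ.ord) : ∃ γ < κ.ord, ∀ x, S.ht x ≤ β → T.ht (f x) < γ := by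
  have hsmall : #{x : S.X | S.ht x ≤ β} < Cardinal.lift.{1} κ :=
    (Cardinal.mk_le_mk_of_subset fun x (hx : S.ht x ≤ β) => Order.lt_add_one_iff.2 hx).trans_lt
      (mk_ht_lt_lt hreg S ((Cardinal.isSuccLimit_ord hreg.aleph0_le).add_one_lt hβ))
  obtain ⟨γ, hγ, hbound⟩ := hreg.exists_lt_ord_forall_lt hsmall
    (f := fun x => T.ht (f x)) fun x => T.ht_lt _
  exact ⟨γ, hγ, fun x hx => hbound ⟨x, hx⟩⟩

section Matching

variable {e : PartialEquiv S.X T.X} {α : Ordinal}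

def PreservesLex (S T : LexKTree κ) (e : PartialEquiv S.X T.X) : Prop :=
  ∀ x ∈ e.source, ∀ x' ∈ e.source, S.llt x x' ↔ T.llt (e x) (e x')

theorem PreservesLex.symm (h : PreservesLex S T e) : PreservesLex T S e.symm := by
  intro y hy y' hy'
  rw [h _ (e.map_target hy) _ (e.map_target hy'), e.right_inv hy, e.right_inv hy']

def ConeMatch (S T : LexKTree κ) (e : PartialEquiv S.X T.X) (s : S.X) (t : T.X) : Prop :=
  T.ht t = S.ht s ∧ e '' (e.source ∩ Ici s) = e.target ∩ Ici t

namespace ConeMatch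

variable {s s' : S.X} {t t' : T.X}

theorem le_apply (h : ConeMatch S T e s t) {x : S.X} (hx : x ∈ e.source) (hsx : s ≤ x) :
    t ≤ e x := by
  have hex : e x ∈ e.target ∩ Ici t := h.2 ▸ mem_image_of_mem e ⟨hx, hsx⟩
  exact hex.2

theorem symm (h : ConeMatch S T e s t) : ConeMatch T S e.symm t s :=
  ⟨h.1.symm, by
    rw [PartialEquiv.symm_source, PartialEquiv.symm_target, ← h.2,
      e.symm_image_image_of_subset_source inter_subset_left]⟩

theorem mem_lowerClosure (h : ConeMatch S T e s t) (hs : s ∈ lowerClosure e.source) :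
    t ∈ lowerClosure e.target := by
  obtain ⟨x, hx, hsx⟩ := hs
  exact ⟨e x, e.map_source hx, h.le_apply hx hsx⟩

theorem right_unique (h : ConeMatch S T e s t) (h' : ConeMatch S T e s t')
    (hs : s ∈ lowerClosure e.source) : t = t' :=
  eq_of_inter_Ici_eq (h.mem_lowerClosure hs) (h.2.symm.trans h'.2) (h.1.trans h'.1.symm)

theorem left_unique (h : ConeMatch S T e s t) (h' : ConeMatch S T e s' t)
    (hs : s ∈ lowerClosure e.source) : s = s' :=
  h.symm.right_unique h'.symm (h.mem_lowerClosure hs)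

theorem le_of_le (h : ConeMatch S T e s t) (h' : ConeMatch S T e s' t')
    (hs' : s' ∈ lowerClosure e.source) (hle : s ≤ s') : t ≤ t' := by
  obtain ⟨hht, hsub⟩ := (le_iff_of_mem_lowerClosure hs').1 hle
  refine (le_iff_of_mem_lowerClosure (h'.mem_lowerClosure hs')).2 ⟨?_, ?_⟩
  · rwa [h.1, h'.1]
  · rw [← h.2, ← h'.2]
    exact image_mono hsub

theorem le_iff (h : ConeMatch S T e s t) (h' : ConeMatch S T e s' t')
    (hs' : s' ∈ lowerClosure e.source) : s ≤ s' ↔ t ≤ t' :=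
  ⟨h.le_of_le h' hs', h.symm.le_of_le h'.symm (h'.mem_lowerClosure hs')⟩

theorem lt_iff (h : ConeMatch S T e s t) (h' : ConeMatch S T e s' t')
    (hs : s ∈ lowerClosure e.source) (hs' : s' ∈ lowerClosure e.source) :
    s < s' ↔ t < t' := by
  rw [lt_iff_le_and_ne, lt_iff_le_and_ne, h.le_iff h' hs']
  refine and_congr_right fun _ => not_congr ⟨?_, ?_⟩
  · rintro rfl
    exact h.right_unique h' hs
  · rintro rfl
    exact h.left_unique h' hs

theorem llt_of_llt (hlex : PreservesLex S T e) (h : ConeMatch S T e s t)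
    (h' : ConeMatch S T e s' t') (hs : s ∈ lowerClosure e.source)
    (hs' : s' ∈ lowerClosure e.source) (hl : S.llt s s') : T.llt t t' := by
  by_cases hss' : s ≤ s'
  · refine T.llt_of_tlt t t' ((h.lt_iff h' hs hs').1 (hss'.lt_of_ne ?_))
    rintro rfl
    exact S.llt_irrefl s hl
  have hs's : ¬ s' ≤ s := fun hle => not_llt_of_le hle hl
  obtain ⟨x, hx, hsx⟩ := _root_.mem_lowerClosure.1 hs
  obtain ⟨x', hx', hsx'⟩ := _root_.mem_lowerClosure.1 hs'
  refine (llt_iff_of_not_le (mt (h.le_iff h' hs').2 hss') (mt (h'.le_iff h hs).2 hs's)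
    (h.le_apply hx hsx) (h'.le_apply hx' hsx')).2 ?_
  exact (hlex x hx x' hx').1 ((llt_iff_of_not_le hss' hs's hsx hsx').1 hl)

theorem llt_iff (hlex : PreservesLex S T e) (h : ConeMatch S T e s t)
    (h' : ConeMatch S T e s' t') (hs : s ∈ lowerClosure e.source)
    (hs' : s' ∈ lowerClosure e.source) : S.llt s s' ↔ T.llt t t' :=
  ⟨h.llt_of_llt hlex h' hs hs', h.symm.llt_of_llt hlex.symm h'.symm (h.mem_lowerClosure hs)
    (h'.mem_lowerClosure hs')⟩

end ConeMatch

def HeightCompat (S T : LexKTree κ) (e : PartialEquiv S.X T.X) (α : Ordinal) : Prop :=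
  ∀ x ∈ e.source, S.ht x < α ↔ T.ht (e x) < α

def MatchAt (S T : LexKTree κ) (e : PartialEquiv S.X T.X) (α : Ordinal) : Prop :=
  ∀ s ∈ lowerClosure e.source, S.ht s = α → ∃ t, ConeMatch S T e s t

def ConesAlignAt (S T : LexKTree κ) (e : PartialEquiv S.X T.X) (α : Ordinal) : Prop :=
  ∀ s ∈ lowerClosure e.source, S.ht s = α → ∃ t, T.ht t = α ∧ e '' (e.source ∩ Ici s) ⊆ Ici t

def SplitsAbove (S T : LexKTree κ) (e : PartialEquiv S.X T.X) (s : S.X) (r r' : T.X) : Prop :=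
  ∃ x ∈ e.source ∩ Ici s, ∃ x' ∈ e.source ∩ Ici s, r ≤ e x ∧ r' ≤ e x'

def goodLevels (S T : LexKTree κ) (e : PartialEquiv S.X T.X) : Set Ordinal :=
  {α | α < κ.ord ∧ Order.IsSuccLimit α ∧ HeightCompat S T e α ∧ MatchAt S T e α ∧
    MatchAt T S e.symm α}

theorem HeightCompat.symm (h : HeightCompat S T e α) : HeightCompat T S e.symm α := by
  intro y hy
  have hy' := h _ (e.map_target hy)
  rw [e.right_inv hy] at hy'
  exact hy'.symm

theorem HeightCompat.le_ht_apply (h : HeightCompat S T e α) {x : S.X} (hx : x ∈ e.source)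
    (hα : α ≤ S.ht x) : α ≤ T.ht (e x) :=
  not_lt.1 fun hlt => ((h x hx).2 hlt).not_ge hα

theorem matchAt_of_isSuccLimit (hlim : Order.IsSuccLimit α) (hc : HeightCompat S T e α)
    (hcof : ∀ β < α, ∃ γ, β < γ ∧ γ < α ∧ MatchAt S T e γ) : MatchAt S T e α := by
  intro s hs hsα
  obtain ⟨x₀, hx₀, hsx₀⟩ := mem_lowerClosure.1 hs
  obtain ⟨t, htx₀, htα⟩ :=
    exists_le_ht_eq (e x₀) (hc.le_ht_apply hx₀ (hsα ▸ S.strictMono_ht.monotone hsx₀))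
  have happrox : ∀ β < α, ∃ s' t', β < S.ht s' ∧ s' ≤ s ∧ t' ≤ t ∧ ConeMatch S T e s' t' := by
    intro β hβ
    obtain ⟨γ, hβγ, hγα, hmatch⟩ := hcof β hβ
    obtain ⟨s', hs's, hs'γ⟩ := exists_le_ht_eq s (hsα ▸ hγα.le)
    obtain ⟨t', ht'⟩ := hmatch s' ((lowerClosure e.source).lower hs's hs) hs'γ
    refine ⟨s', t', hs'γ ▸ hβγ, hs's,
      le_of_le_of_ht_le (ht'.le_apply hx₀ (hs's.trans hsx₀)) htx₀ ?_, ht'⟩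
    rw [ht'.1, hs'γ, htα]
    exact hγα.le
  refine ⟨t, htα.trans hsα.symm, subset_antisymm ?_ ?_⟩
  · rintro _ ⟨x, ⟨hx, hsx⟩, rfl⟩
    refine ⟨e.map_source hx, le_of_forall_exists_le_le (htα ▸ hlim) ?_ fun β hβ => ?_⟩
    · rw [htα]
      exact hc.le_ht_apply hx (hsα ▸ S.strictMono_ht.monotone hsx)
    · obtain ⟨s', t', hβs', hs's, ht't, ht'⟩ := happrox β (htα ▸ hβ)
      exact ⟨t', ht'.1 ▸ hβs', ht't, ht'.le_apply hx (hs's.trans hsx)⟩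
  · rintro y ⟨hy, hty⟩
    refine ⟨e.symm y, ⟨e.map_target hy, le_of_forall_exists_le_le (hsα ▸ hlim) ?_
      fun β hβ => ?_⟩, e.right_inv hy⟩
    · rw [hsα]
      exact hc.symm.le_ht_apply hy (htα ▸ T.strictMono_ht.monotone hty)
    · obtain ⟨s', t', hβs', hs's, ht't, ht'⟩ := happrox β (hsα ▸ hβ)
      obtain ⟨x, ⟨hx, hs'x⟩, rfl⟩ : y ∈ e '' (e.source ∩ Ici s') :=
        ht'.2 ▸ ⟨hy, ht't.trans hty⟩
      exact ⟨s', hβs', hs's, by rwa [e.left_inv hx]⟩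

theorem matchAt_of_conesAlignAt (h : ConesAlignAt S T e α) (h' : ConesAlignAt T S e.symm α) :
    MatchAt S T e α := by
  intro s hs hsα
  obtain ⟨t, htα, hsub⟩ := h s hs hsα
  obtain ⟨x₀, hx₀, hsx₀⟩ := mem_lowerClosure.1 hs
  have htx₀ : t ≤ e x₀ := hsub ⟨x₀, ⟨hx₀, hsx₀⟩, rfl⟩
  obtain ⟨u, huα, hsub'⟩ := h' t (mem_lowerClosure.2 ⟨e x₀, e.map_source hx₀, htx₀⟩) htα
  have hux₀ : u ≤ x₀ := e.left_inv hx₀ ▸ hsub' ⟨e x₀, ⟨e.map_source hx₀, htx₀⟩, rfl⟩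
  obtain rfl : u = s := eq_of_le_of_ht_eq hux₀ hsx₀ (huα.trans hsα.symm)
  refine ⟨t, htα.trans hsα.symm, subset_antisymm ?_ fun y hy => ?_⟩
  · rintro _ ⟨x, hx, rfl⟩
    exact ⟨e.map_source hx.1, hsub ⟨x, hx, rfl⟩⟩
  · exact ⟨e.symm y, ⟨e.map_target hy.1, hsub' ⟨y, hy, rfl⟩⟩, e.right_inv hy.1⟩

theorem conesAlignAt_of_forall_not_splitsAbove (hlim : Order.IsSuccLimit α)
    (hc : HeightCompat S T e α)
    (h : ∀ s r r', S.ht s = α → T.ht r = T.ht r' → T.ht r < α → T.llt r r' →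
      ¬ SplitsAbove S T e s r r') : ConesAlignAt S T e α := by
  intro s hs hsα
  obtain ⟨x₀, hx₀, hsx₀⟩ := mem_lowerClosure.1 hs
  obtain ⟨t, htx₀, htα⟩ :=
    exists_le_ht_eq (e x₀) (hc.le_ht_apply hx₀ (hsα ▸ S.strictMono_ht.monotone hsx₀))
  refine ⟨t, htα, ?_⟩
  rintro _ ⟨x, ⟨hx, hsx⟩, rfl⟩
  obtain ⟨q, hqx, hqα⟩ :=
    exists_le_ht_eq (e x) (hc.le_ht_apply hx (hsα ▸ S.strictMono_ht.monotone hsx))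
  suffices t = q from this ▸ hqx
  refine eq_of_forall_lt_imp_lt (htα ▸ hlim) (htα.trans hqα.symm) fun z hzt => ?_
  by_contra hzq
  have hzα : T.ht z < α := htα ▸ T.strictMono_ht hzt
  obtain ⟨z', hz'q, hz'⟩ := exists_le_ht_eq q (hqα ▸ hzα.le)
  have hne : z ≠ z' := by
    rintro rfl
    exact hzq (hz'q.lt_of_ne (by rintro rfl; exact hzα.ne (hz'.symm.trans hqα)))
  rcases T.llt_total z z' with heq | hl | hl
  · exact hne heq
  · exact h s z z' hsα hz'.symm hzα hl
      ⟨x₀, ⟨hx₀, hsx₀⟩, x, ⟨hx, hsx⟩, hzt.le.trans htx₀, hz'q.trans hqx⟩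
  · exact h s z' z hsα hz' (hz'.symm ▸ hzα) hl
      ⟨x, ⟨hx, hsx⟩, x₀, ⟨hx₀, hsx₀⟩, hz'q.trans hqx, hzt.le.trans htx₀⟩

theorem SplitsAbove.le_or_le {s₁ s₂ : S.X} {r r' : T.X} (hlex : PreservesLex S T e)
    (hr : T.ht r = T.ht r') (hrr' : T.llt r r') (h₁ : SplitsAbove S T e s₁ r r')
    (h₂ : SplitsAbove S T e s₂ r r') : s₁ ≤ s₂ ∨ s₂ ≤ s₁ := by
  obtain ⟨x₁, ⟨hx₁, hs₁x₁⟩, x₁', ⟨hx₁', hs₁x₁'⟩, hrx₁, hr'x₁'⟩ := h₁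
  obtain ⟨x₂, ⟨hx₂, hs₂x₂⟩, x₂', ⟨hx₂', hs₂x₂'⟩, hrx₂, hr'x₂'⟩ := h₂
  have h₂₁ : S.llt x₂ x₁' := (hlex _ hx₂ _ hx₁').2 (llt_of_llt_of_ht_eq hrr' hr hrx₂ hr'x₁')
  have h₁₂ : S.llt x₁ x₂' := (hlex _ hx₁ _ hx₂').2 (llt_of_llt_of_ht_eq hrr' hr hrx₁ hr'x₂')
  obtain ⟨z, hs₁z, hs₂z⟩ : ∃ z, s₁ ≤ z ∧ s₂ ≤ z := by
    rcases S.llt_total x₁ x₂ with rfl | hl | hl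
    · exact ⟨x₁, hs₁x₁, hs₂x₂⟩
    · exact ⟨x₂, le_of_llt_of_llt hs₁x₁ hs₁x₁' hl h₂₁, hs₂x₂⟩
    · exact ⟨x₁, hs₁x₁, le_of_llt_of_llt hs₂x₂ hs₂x₂' hl h₁₂⟩
  exact (le_total (S.ht s₁) (S.ht s₂)).imp (le_of_le_of_ht_le hs₁z hs₂z)
    (le_of_le_of_ht_le hs₂z hs₁z)

theorem exists_bound_splitsAbove (hreg : κ.IsRegular) (hlex : PreservesLex S T e)
    {r r' : T.X} (hr : T.ht r = T.ht r') (hrr' : T.llt r r') :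
    ∃ b < κ.ord, ∀ s, SplitsAbove S T e s r r' → S.ht s < b := by
  by_contra! hunbounded
  set B := {s | SplitsAbove S T e s r r'}
  refine S.aronszajn ⟨B, fun a ha c hc => ?_, ?_⟩
  · rcases SplitsAbove.le_or_le hlex hr hrr' ha hc with (rfl | hac) | (rfl | hca)
    exacts [Or.inl rfl, Or.inr (Or.inl hac), Or.inl rfl, Or.inr (Or.inr hca)]
  · refine (hreg.lift_le_mk_of_forall_exists_le (I := S.ht '' B) ?_ fun β hβ => ?_).trans
      Cardinal.mk_image_le
    · rintro _ ⟨s, -, rfl⟩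
      exact S.ht_lt s
    · obtain ⟨s, hs, hβs⟩ := hunbounded β hβ
      exact ⟨S.ht s, mem_image_of_mem _ hs, hβs⟩

theorem exists_bound_splitsAbove_of_ht_eq (hreg : κ.IsRegular) (hlex : PreservesLex S T e)
    {δ : Ordinal} (hδ : δ < κ.ord) : ∃ b < κ.ord, ∀ s r r', T.ht r = δ → T.ht r' = δ →
      T.llt r r' → SplitsAbove S T e s r r' → S.ht s < b := by
  have hpair : ∀ p : {r : T.X | T.ht r = δ} × {r : T.X | T.ht r = δ}, ∃ b < κ.ord,
      T.llt p.1 p.2 → ∀ s, SplitsAbove S T e s p.1 p.2 → S.ht s < b := by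
    rintro ⟨⟨r, hr⟩, ⟨r', hr'⟩⟩
    by_cases hl : T.llt r r'
    · obtain ⟨b, hb, hbound⟩ := exists_bound_splitsAbove hreg hlex (hr.trans hr'.symm) hl
      exact ⟨b, hb, fun _ => hbound⟩
    · exact ⟨δ, hδ, fun h => absurd h hl⟩
  choose b hb hbound using hpair
  have hsmall : #({r : T.X | T.ht r = δ} × {r : T.X | T.ht r = δ}) < Cardinal.lift.{1} κ := by
    rw [Cardinal.mk_prod, Cardinal.lift_id]
    exact Cardinal.mul_lt_of_lt hreg.lift.aleph0_le (T.level_small δ hδ) (T.level_small δ hδ)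
  obtain ⟨γ, hγ, hbγ⟩ := hreg.exists_lt_ord_forall_lt hsmall hb
  exact ⟨γ, hγ, fun s r r' hr hr' hl hs => (hbound ⟨⟨r, hr⟩, ⟨r', hr'⟩⟩ hl s hs).trans (hbγ _)⟩

theorem heightCompat_of_forall_lt {F G : Ordinal → Ordinal}
    (hF : ∀ β < κ.ord, F β < κ.ord ∧ ∀ x, S.ht x ≤ β → T.ht (e x) < F β)
    (hG : ∀ β < κ.ord, G β < κ.ord ∧ ∀ y, T.ht y ≤ β → S.ht (e.symm y) < G β)
    (hακ : α < κ.ord) (hFα : ∀ β < α, F β < α) (hGα : ∀ β < α, G β < α) :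
    HeightCompat S T e α := by
  refine fun x hx => ⟨fun hxα => ?_, fun hxα => ?_⟩
  · exact ((hF _ (hxα.trans hακ)).2 x le_rfl).trans (hFα _ hxα)
  · have hGx := (hG _ (hxα.trans hακ)).2 (e x) le_rfl
    rw [e.left_inv hx] at hGx
    exact hGx.trans (hGα _ hxα)

theorem conesAlignAt_of_forall_lt (hlim : Order.IsSuccLimit α) (hc : HeightCompat S T e α)
    {B : Ordinal → Ordinal} (hB : ∀ δ < κ.ord, B δ < κ.ord ∧ ∀ s r r', T.ht r = δ →
      T.ht r' = δ → T.llt r r' → SplitsAbove S T e s r r' → S.ht s < B δ)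
    (hακ : α < κ.ord) (hBα : ∀ δ < α, B δ < α) : ConesAlignAt S T e α :=
  conesAlignAt_of_forall_not_splitsAbove hlim hc fun s r r' hsα hr hrα hl hs =>
    (((hB _ (hrα.trans hακ)).2 s r r' rfl hr.symm hl hs).trans (hBα _ hrα)).ne hsα

theorem exists_mem_goodLevels_gt (hreg : κ.IsRegular) (hunc : ℵ₀ < κ)
    (hlex : PreservesLex S T e) {β₀ : Ordinal} (hβ₀ : β₀ < κ.ord) :
    ∃ α ∈ goodLevels S T e, β₀ < α := by
  choose! F hF using fun β (hβ : β < κ.ord) => exists_ht_image_lt hreg e hβ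
  choose! G hG using fun β (hβ : β < κ.ord) => exists_ht_image_lt hreg e.symm hβ
  choose! B hB using fun δ (hδ : δ < κ.ord) => exists_bound_splitsAbove_of_ht_eq hreg hlex hδ
  choose! B' hB' using fun δ (hδ : δ < κ.ord) =>
    exists_bound_splitsAbove_of_ht_eq hreg hlex.symm hδ
  obtain ⟨α, hβ₀α, hακ, hlim, hclosed⟩ := hreg.exists_isSuccLimit_forall_lt hunc
    (h := fun β => max (max (F β) (G β)) (max (B β) (B' β)))
    (fun β hβ => max_lt (max_lt (hF β hβ).1 (hG β hβ).1) (max_lt (hB β hβ).1 (hB' β hβ).1)) hβ₀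
  simp only [max_lt_iff] at hclosed
  have hc : HeightCompat S T e α := heightCompat_of_forall_lt hF hG hακ
    (fun β hβ => (hclosed β hβ).1.1) (fun β hβ => (hclosed β hβ).1.2)
  have halign := conesAlignAt_of_forall_lt hlim hc hB hακ fun β hβ => (hclosed β hβ).2.1
  have halign' := conesAlignAt_of_forall_lt hlim hc.symm hB' hακ fun β hβ => (hclosed β hβ).2.2
  exact ⟨α, ⟨hακ, hlim, hc, matchAt_of_conesAlignAt halign halign',
    matchAt_of_conesAlignAt halign' halign⟩, hβ₀α⟩

theorem mem_goodLevels_of_forall_exists (hακ : α < κ.ord) (hα : 0 < α)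
    (hcof : ∀ β < α, ∃ γ ∈ goodLevels S T e, β < γ ∧ γ < α) : α ∈ goodLevels S T e := by
  have hlim : Order.IsSuccLimit α := by
    refine Order.IsSuccLimit.mk (not_isMin_of_lt hα) (Order.isSuccPrelimit_iff_succ_lt.2 ?_)
    intro β hβ
    obtain ⟨γ, -, hβγ, hγα⟩ := hcof β hβ
    exact (Order.succ_le_of_lt hβγ).trans_lt hγα
  have hc : HeightCompat S T e α := by
    refine fun x hx => ⟨fun hxα => ?_, fun hxα => ?_⟩
    · obtain ⟨γ, hγ, hxγ, hγα⟩ := hcof _ hxα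
      exact ((hγ.2.2.1 x hx).1 hxγ).trans hγα
    · obtain ⟨γ, hγ, hxγ, hγα⟩ := hcof _ hxα
      exact ((hγ.2.2.1 x hx).2 hxγ).trans hγα
  refine ⟨hακ, hlim, hc, matchAt_of_isSuccLimit hlim hc fun β hβ => ?_,
    matchAt_of_isSuccLimit hlim hc.symm fun β hβ => ?_⟩
  · obtain ⟨γ, hγ, hβγ, hγα⟩ := hcof β hβ
    exact ⟨γ, hβγ, hγα, hγ.2.2.2.1⟩
  · obtain ⟨γ, hγ, hβγ, hγα⟩ := hcof β hβ
    exact ⟨γ, hβγ, hγα, hγ.2.2.2.2⟩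

theorem clubIn_goodLevels (hreg : κ.IsRegular) (hunc : ℵ₀ < κ)
    (hlex : PreservesLex S T e) : ClubIn (goodLevels S T e) κ.ord := by
  refine ⟨fun α hα => hα.1, fun β hβ => ?_, fun α hακ hα hsup => ?_⟩
  · obtain ⟨α, hα, hβα⟩ := exists_mem_goodLevels_gt hreg hunc hlex hβ
    exact ⟨α, hα, hβα.le⟩
  refine mem_goodLevels_of_forall_exists hακ hα fun β hβ => ?_
  have hne : (goodLevels S T e ∩ Iio α).Nonempty := by
    by_contra hempty
    rw [not_nonempty_iff_eq_empty.1 hempty, csSup_empty] at hsup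
    exact hα.ne hsup
  obtain ⟨γ, ⟨hγ, hγα⟩, hβγ⟩ :=
    (lt_csSup_iff ⟨α, fun _ h => le_of_lt h.2⟩ hne).1 (hsup.symm ▸ hβ)
  exact ⟨γ, hγ, hβγ, hγα⟩

theorem exists_clubIn_bijOn_coneMatch (hreg : κ.IsRegular) (hunc : ℵ₀ < κ)
    (hlex : PreservesLex S T e) :
    ∃ C, ClubIn C κ.ord ∧ ∃ f : S.X → T.X,
      BijOn f {s | s ∈ lowerClosure e.source ∧ S.ht s ∈ C}
        {t | t ∈ lowerClosure e.target ∧ T.ht t ∈ C} ∧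
      ∀ s ∈ lowerClosure e.source, S.ht s ∈ C → ConeMatch S T e s (f s) := by
  refine ⟨goodLevels S T e, clubIn_goodLevels hreg hunc hlex, ?_⟩
  have hmatch : ∀ s, ∃ t, s ∈ lowerClosure e.source → S.ht s ∈ goodLevels S T e →
      ConeMatch S T e s t := by
    intro s
    by_cases hs : s ∈ lowerClosure e.source ∧ S.ht s ∈ goodLevels S T e
    · obtain ⟨t, ht⟩ := hs.2.2.2.2.1 s hs.1 rfl
      exact ⟨t, fun _ _ => ht⟩
    · exact ⟨e s, fun h₁ h₂ => absurd ⟨h₁, h₂⟩ hs⟩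
  choose f hf using hmatch
  refine ⟨f, ⟨fun s hs => ?_, fun s hs s' hs' heq => ?_, fun t ht => ?_⟩, hf⟩
  · exact ⟨(hf s hs.1 hs.2).mem_lowerClosure hs.1, (hf s hs.1 hs.2).1 ▸ hs.2⟩
  · exact (hf s hs.1 hs.2).left_unique (heq ▸ hf s' hs'.1 hs'.2) hs.1
  · obtain ⟨s, hst⟩ := ht.2.2.2.2.2 t ht.1 rfl
    have hs : s ∈ lowerClosure e.source := hst.mem_lowerClosure ht.1
    have hsC : S.ht s ∈ goodLevels S T e := hst.1 ▸ ht.2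
    exact ⟨s, ⟨hs, hsC⟩, (hf s hs hsC).right_unique hst.symm hs⟩

end Matching

end LexKTree

open LexKTree in
theorem stmt15_general (κ : Cardinal.{0}) (hreg : κ.IsRegular) (hunc : Cardinal.aleph0 < κ)
    (S T : LexKTree κ) (X : Set S.X) (Y : Set T.X)
    (π : S.X → T.X) (hπ : Set.BijOn π X Y)
    (hπiso : ∀ x ∈ X, ∀ x' ∈ X, S.llt x x' ↔ T.llt (π x) (π x')) :
    ∃ C : Set Ordinal, ClubIn C κ.ord ∧ ∃ f : S.X → T.X,
      (∀ x, (∃ x' ∈ X, x = x' ∨ S.tlt x x') ∧ S.ht x ∈ C →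
        (∃ y' ∈ Y, f x = y' ∨ T.tlt (f x) y') ∧ T.ht (f x) ∈ C) ∧
      Set.BijOn f {x | (∃ x' ∈ X, x = x' ∨ S.tlt x x') ∧ S.ht x ∈ C}
        {y | (∃ y' ∈ Y, y = y' ∨ T.tlt y y') ∧ T.ht y ∈ C} ∧
      (∀ x ∈ {x | (∃ x' ∈ X, x = x' ∨ S.tlt x x') ∧ S.ht x ∈ C},
       ∀ x' ∈ {x | (∃ x' ∈ X, x = x' ∨ S.tlt x x') ∧ S.ht x ∈ C},
        (S.tlt x x' ↔ T.tlt (f x) (f x')) ∧ (S.llt x x' ↔ T.llt (f x) (f x'))) ∧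
      (∀ x ∈ {x | (∃ x' ∈ X, x = x' ∨ S.tlt x x') ∧ S.ht x ∈ C},
        π '' {z ∈ X | z = x ∨ S.tlt x z} = {w ∈ Y | w = f x ∨ T.tlt (f x) w}) := by
  obtain ⟨x₀, -⟩ := S.level_ne 0 (Cardinal.ord_pos.2 (Cardinal.aleph0_pos.trans hunc))
  have : Nonempty S.X := ⟨x₀⟩
  have hlex : PreservesLex S T (hπ.toPartialEquiv π X Y) := hπiso
  obtain ⟨C, hC, f, hbij, hmatch⟩ := exists_clubIn_bijOn_coneMatch hreg hunc hlex
  refine ⟨C, hC, f, hbij.mapsTo, hbij, fun x hx x' hx' => ⟨?_, ?_⟩, fun x hx => ?_⟩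
  · exact (hmatch x hx.1 hx.2).lt_iff (hmatch x' hx'.1 hx'.2) hx.1 hx'.1
  · exact (hmatch x hx.1 hx.2).llt_iff hlex (hmatch x' hx'.1 hx'.2) hx.1 hx'.1
  · rw [sep_eq_or_lt_eq_inter_Ici, sep_eq_or_lt_eq_inter_Ici]
    exact (hmatch x hx.1 hx.2).2

/-- If `π : (X,<_lS) → (Y,<_lT)` is an order isomorphism between `κ`-sized subsets of two
lexicographically ordered Hausdorff `κ`-Aronszajn trees, then on a club `C` of levels the
downward closures `X_↓↾C` and `Y_↓↾C` are isomorphic as trees and as lexicographic orders,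
by a map agreeing with `π`. -/
theorem stmt15 (κ : Cardinal.{0}) (hreg : κ.IsRegular) (hunc : Cardinal.aleph0 < κ)
    (S T : LexKTree κ) (X : Set S.X) (Y : Set T.X)
    (hX : Cardinal.mk ↥X = Cardinal.lift.{1} κ) (hY : Cardinal.mk ↥Y = Cardinal.lift.{1} κ)
    (π : S.X → T.X) (hπ : Set.BijOn π X Y)
    (hπiso : ∀ x ∈ X, ∀ x' ∈ X, S.llt x x' ↔ T.llt (π x) (π x')) :
    ∃ C : Set Ordinal, ClubIn C κ.ord ∧ ∃ f : S.X → T.X,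
      (∀ x, (∃ x' ∈ X, x = x' ∨ S.tlt x x') ∧ S.ht x ∈ C →
        (∃ y' ∈ Y, f x = y' ∨ T.tlt (f x) y') ∧ T.ht (f x) ∈ C) ∧
      Set.BijOn f {x | (∃ x' ∈ X, x = x' ∨ S.tlt x x') ∧ S.ht x ∈ C}
        {y | (∃ y' ∈ Y, y = y' ∨ T.tlt y y') ∧ T.ht y ∈ C} ∧
      (∀ x ∈ {x | (∃ x' ∈ X, x = x' ∨ S.tlt x x') ∧ S.ht x ∈ C},
       ∀ x' ∈ {x | (∃ x' ∈ X, x = x' ∨ S.tlt x x') ∧ S.ht x ∈ C},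
        (S.tlt x x' ↔ T.tlt (f x) (f x')) ∧ (S.llt x x' ↔ T.llt (f x) (f x'))) ∧
      (∀ x ∈ {x | (∃ x' ∈ X, x = x' ∨ S.tlt x x') ∧ S.ht x ∈ C},
        π '' {z ∈ X | z = x ∨ S.tlt x z} = {w ∈ Y | w = f x ∨ T.tlt (f x) w}) :=
  stmt15_general κ hreg hunc S T X Y π hπ hπiso
end
end
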